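/- arXiv:2009.08017 — 8 statements merged into one kernel-verified Lean document; each statement's English description precedes it below -/
import Mathlib

section
/- The star chromatic index of the cycle C_n equals 3 if n ≠ 5, and equals 4 if n = 5. -/
/-!
An edge colouring of `C_m` is the cyclic sequence `f i` of the colours of the edges
`s(i, i + 1)`, and the paths with four edges are the windows `i, …, i + 3` of this sequence. So a
star edge colouring is a cyclic sequence in which consecutive colours differ and no window reads
`abab`. With two colours every proper sequence alternates, so there is none. With three colours
`(012)*`, `(012)*0121` and `(012)*01021` cover every length `m ≥ 3` except `5`. For `m = 5`,
three colours are ruled out by exhaustion and `01231` uses four.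
-/

open SimpleGraph
open scoped Fin.CommRing

/-- A star edge-coloring with `k` colors: a proper edge-coloring such that no
path or cycle with four edges is bicolored. -/
def IsStarEdgeColoring {V : Type*} {k : ℕ} (G : SimpleGraph V) (c : Sym2 V → Fin k) : Prop :=
  (∀ ⦃e f : Sym2 V⦄, e ∈ G.edgeSet → f ∈ G.edgeSet → e ≠ f →
      (∃ v, v ∈ e ∧ v ∈ f) → c e ≠ c f) ∧
  (∀ v0 v1 v2 v3 v4 : V, G.Adj v0 v1 → G.Adj v1 v2 → G.Adj v2 v3 → G.Adj v3 v4 →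
      v0 ≠ v2 → v0 ≠ v3 → v1 ≠ v3 → v1 ≠ v4 → v2 ≠ v4 →
      ¬ (c s(v0, v1) = c s(v2, v3) ∧ c s(v1, v2) = c s(v3, v4)))

/-- The star chromatic index: the least `k` admitting a star `k`-edge-coloring. -/
noncomputable def starChromaticIndex {V : Type*} (G : SimpleGraph V) : ℕ :=
  sInf {k | ∃ c : Sym2 V → Fin k, IsStarEdgeColoring G c}

theorem IsStarEdgeColoring.castLE {V : Type*} {G : SimpleGraph V} {k l : ℕ}
    {c : Sym2 V → Fin k} (hc : IsStarEdgeColoring G c) (hkl : k ≤ l) :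
    IsStarEdgeColoring G (Fin.castLE hkl ∘ c) := by
  have hinj := Fin.castLE_injective hkl
  refine ⟨fun e f he hf hef hv h ↦ hc.1 he hf hef hv (hinj h), ?_⟩
  rintro v0 v1 v2 v3 v4 h01 h12 h23 h34 h02 h03 h13 h14 h24 ⟨h, h'⟩
  exact hc.2 v0 v1 v2 v3 v4 h01 h12 h23 h34 h02 h03 h13 h14 h24 ⟨hinj h, hinj h'⟩

theorem starChromaticIndex_eq_succ_iff {V : Type*} (G : SimpleGraph V) (k : ℕ) :
    starChromaticIndex G = k + 1 ↔
      (∃ c : Sym2 V → Fin (k + 1), IsStarEdgeColoring G c) ∧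
        ¬ ∃ c : Sym2 V → Fin k, IsStarEdgeColoring G c := by
  refine Nat.sInf_upward_closed_eq_succ_iff ?_ k
  rintro k l hkl ⟨c, hc⟩
  exact ⟨_, hc.castLE hkl⟩

theorem Nat.add_mod_eq_ite_of_lt_of_le {j d m : ℕ} (hj : j < m) (hd : d ≤ m) :
    (j + d) % m = if j + d < m then j + d else j + d - m := by
  split_ifs with h
  · exact Nat.mod_eq_of_lt h
  · rw [Nat.mod_eq_sub_mod (by omega), Nat.mod_eq_of_lt (by omega)]

variable {n k : ℕ}

namespace SimpleGraph

theorem cycleGraph_adj_iff_eq_add_one {u v : Fin (n + 2)} :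
    (cycleGraph (n + 2)).Adj u v ↔ v = u + 1 ∨ u = v + 1 := by
  rw [cycleGraph_adj, sub_eq_iff_eq_add', sub_eq_iff_eq_add', or_comm]

theorem cycleGraph_adj_add_one (u : Fin (n + 2)) : (cycleGraph (n + 2)).Adj u (u + 1) :=
  cycleGraph_adj_iff_eq_add_one.2 (.inl rfl)

theorem cycleGraph_exists_eq_mk_add_one {e : Sym2 (Fin (n + 2))}
    (he : e ∈ (cycleGraph (n + 2)).edgeSet) : ∃ i, e = s(i, i + 1) := by
  induction e with
  | h u v =>
    rcases cycleGraph_adj_iff_eq_add_one.1 ((mem_edgeSet _).1 he) with rfl | rfl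
    exacts [⟨u, rfl⟩, ⟨v, Sym2.eq_swap⟩]

theorem cycleGraph_eq_add_one_of_adj {u v w : Fin (n + 2)} (hvw : (cycleGraph (n + 2)).Adj v w)
    (huw : u ≠ w) (huv : v = u + 1) : w = v + 1 := by
  rcases cycleGraph_adj_iff_eq_add_one.1 hvw with h | rfl
  · exact h
  · exact absurd (add_right_cancel huv).symm huw

theorem cycleGraph_eq_add_one_of_adj' {u v w : Fin (n + 2)} (hvw : (cycleGraph (n + 2)).Adj v w)
    (huw : u ≠ w) (huv : u = v + 1) : v = w + 1 := by
  rcases cycleGraph_adj_iff_eq_add_one.1 hvw with rfl | h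
  · exact absurd huv huw
  · exact h

end SimpleGraph

namespace Fin

theorem self_ne_add_one (i : Fin (n + 2)) : i ≠ i + 1 := by
  simp

theorem self_ne_add_two (i : Fin (n + 3)) : i ≠ i + 2 := by
  simp [Fin.ext_iff, Nat.mod_eq_of_lt]

theorem self_ne_add_three (i : Fin (n + 4)) : i ≠ i + 3 := by
  simp [Fin.ext_iff, Nat.mod_eq_of_lt]

theorem sym2_mk_add_one_injective : Function.Injective fun i : Fin (n + 3) ↦ s(i, i + 1) := by
  intro i j h
  rcases Sym2.eq_iff.1 h with ⟨h, -⟩ | ⟨rfl, h⟩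
  · exact h
  · exact absurd (h.symm.trans (by ring)) (self_ne_add_two j)

end Fin

/-- `f i` stands for the colour of the edge `s(i, i + 1)` of `cycleGraph (n + 3)`. -/
def IsStarColoringSeq (f : Fin (n + 3) → Fin k) : Prop :=
  (∀ i, f i ≠ f (i + 1)) ∧ ∀ i, ¬ (f i = f (i + 2) ∧ f (i + 1) = f (i + 3))

theorem IsStarEdgeColoring.isStarColoringSeq_cycleGraph {c : Sym2 (Fin (n + 3)) → Fin k}
    (hc : IsStarEdgeColoring (cycleGraph (n + 3)) c) :
    IsStarColoringSeq fun i ↦ c s(i, i + 1) := by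
  have hadj (u v : Fin (n + 3)) (h : v = u + 1) : (cycleGraph (n + 3)).Adj u v :=
    h ▸ cycleGraph_adj_add_one u
  have hproper (i : Fin (n + 3)) : c s(i, i + 1) ≠ c s(i + 1, i + 1 + 1) :=
    hc.1 (hadj _ _ rfl) (hadj _ _ rfl) (Fin.sym2_mk_add_one_injective.ne (Fin.self_ne_add_one i))
      ⟨i + 1, Sym2.mem_mk_right _ _, Sym2.mem_mk_left _ _⟩
  refine ⟨hproper, fun i ⟨h02, h13⟩ ↦ ?_⟩
  dsimp only at h02 h13
  cases n with
  | zero =>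
    -- `C₃` has no path with four edges, but there `i + 3 = i`.
    have h3 : ∀ i : Fin 3, i + 3 = i := by decide
    exact hproper i (by rw [h13, h3])
  | succ n =>
    refine hc.2 i (i + 1) (i + 2) (i + 3) (i + 4) (hadj _ _ rfl) (hadj _ _ (by ring))
      (hadj _ _ (by ring)) (hadj _ _ (by ring)) (Fin.self_ne_add_two i) (Fin.self_ne_add_three i)
      ?_ ?_ ?_ ⟨?_, ?_⟩
    · rw [show i + 3 = i + 1 + 2 by ring]; exact Fin.self_ne_add_two _
    · rw [show i + 4 = i + 1 + 3 by ring]; exact Fin.self_ne_add_three _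
    · rw [show i + 4 = i + 2 + 2 by ring]; exact Fin.self_ne_add_two _
    · rwa [show i + 2 + 1 = i + 3 by ring] at h02
    · rwa [show i + 1 + 1 = i + 2 by ring, show i + 3 + 1 = i + 4 by ring] at h13

theorem isStarEdgeColoring_cycleGraph_of_isStarColoringSeq {c : Sym2 (Fin (n + 3)) → Fin k}
    (hc : IsStarColoringSeq fun i ↦ c s(i, i + 1)) :
    IsStarEdgeColoring (cycleGraph (n + 3)) c := by
  obtain ⟨hproper, hstar⟩ := hc
  refine ⟨?_, ?_⟩
  · rintro _ _ he he' hne ⟨v, hv, hv'⟩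
    obtain ⟨i, rfl⟩ := cycleGraph_exists_eq_mk_add_one he
    obtain ⟨j, rfl⟩ := cycleGraph_exists_eq_mk_add_one he'
    have hij : i ≠ j := fun h ↦ hne (h ▸ rfl)
    rw [Sym2.mem_iff] at hv hv'
    rcases hv with rfl | rfl <;> rcases hv' with h | h
    · exact absurd h hij
    · subst h; exact (hproper j).symm
    · subst h; exact hproper i
    · exact absurd (add_right_cancel h) hij
  · have hstar' (i : Fin (n + 3)) : ¬ (c s(i, i + 1) = c s(i + 1 + 1, i + 1 + 1 + 1) ∧
        c s(i + 1, i + 1 + 1) = c s(i + 1 + 1 + 1, i + 1 + 1 + 1 + 1)) := by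
      simpa only [show i + 2 = i + 1 + 1 by ring, show i + 3 = i + 1 + 1 + 1 by ring]
        using hstar i
    rintro v0 v1 v2 v3 v4 h01 h12 h23 h34 h02 - h13 - h24
    rcases cycleGraph_adj_iff_eq_add_one.1 h01 with rfl | rfl
    · obtain rfl := cycleGraph_eq_add_one_of_adj h12 h02 rfl
      obtain rfl := cycleGraph_eq_add_one_of_adj h23 h13 rfl
      obtain rfl := cycleGraph_eq_add_one_of_adj h34 h24 rfl
      exact hstar' v0
    · obtain rfl := cycleGraph_eq_add_one_of_adj' h12 h02 rfl
      obtain rfl := cycleGraph_eq_add_one_of_adj' h23 h13 rfl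
      obtain rfl := cycleGraph_eq_add_one_of_adj' h34 h24 rfl
      have hswap (i : Fin (n + 3)) : s(i + 1, i) = s(i, i + 1) := Sym2.eq_swap
      simp only [hswap]
      exact fun ⟨h1, h2⟩ ↦ hstar' v4 ⟨h2.symm, h1.symm⟩

theorem exists_isStarEdgeColoring_cycleGraph_iff :
    (∃ c : Sym2 (Fin (n + 3)) → Fin k, IsStarEdgeColoring (cycleGraph (n + 3)) c) ↔
      ∃ f : Fin (n + 3) → Fin k, IsStarColoringSeq f := by
  refine ⟨fun ⟨c, hc⟩ ↦ ⟨_, hc.isStarColoringSeq_cycleGraph⟩, fun ⟨f, hf⟩ ↦ ?_⟩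
  refine ⟨Function.extend (fun i ↦ s(i, i + 1)) f fun _ ↦ f 0, ?_⟩
  apply isStarEdgeColoring_cycleGraph_of_isStarColoringSeq
  simpa only [Fin.sym2_mk_add_one_injective.extend_apply] using hf

theorem starChromaticIndex_cycleGraph_eq_succ_iff :
    starChromaticIndex (cycleGraph (n + 3)) = k + 1 ↔
      (∃ f : Fin (n + 3) → Fin (k + 1), IsStarColoringSeq f) ∧
        ¬ ∃ f : Fin (n + 3) → Fin k, IsStarColoringSeq f := by
  rw [starChromaticIndex_eq_succ_iff, exists_isStarEdgeColoring_cycleGraph_iff,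
    exists_isStarEdgeColoring_cycleGraph_iff]

theorem not_isStarColoringSeq_fin_two (f : Fin (n + 3) → Fin 2) : ¬ IsStarColoringSeq f := by
  rintro ⟨hproper, hstar⟩
  have hfin2 : ∀ a b c : Fin 2, a ≠ b → b ≠ c → a = c := by decide
  have hperiodic (i : Fin (n + 3)) : f i = f (i + 2) := by
    rw [show i + 2 = i + 1 + 1 by ring]
    exact hfin2 _ _ _ (hproper i) (hproper (i + 1))
  exact hstar 0 ⟨hperiodic 0, (hperiodic 1).trans (congrArg f (by ring))⟩

theorem not_isStarColoringSeq_five_three (f : Fin 5 → Fin 3) : ¬ IsStarColoringSeq f := by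
  unfold IsStarColoringSeq
  revert f
  decide +kernel

theorem isStarColoringSeq_five_four : IsStarColoringSeq (![0, 1, 2, 3, 1] : Fin 5 → Fin 4) := by
  unfold IsStarColoringSeq
  decide

/-- The word `(012)*`, `(012)*0121` or `(012)*01021` of length `m`, according to `m % 3`. -/
def cycleColorSeq (m j : ℕ) : ℕ :=
  if m % 3 = 1 ∧ j + 1 = m then 1
  else if m % 3 = 2 ∧ j + 3 = m then 0
  else if m % 3 = 2 ∧ j + 2 = m then 2
  else j % 3

theorem cycleColorSeq_lt_three (m j : ℕ) : cycleColorSeq m j < 3 := by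
  unfold cycleColorSeq
  split_ifs <;> omega

theorem cycleColorSeq_ne_add_one {m j : ℕ} (hm : 3 ≤ m) (hj : j < m) :
    cycleColorSeq m j ≠ cycleColorSeq m ((j + 1) % m) := by
  rw [Nat.add_mod_eq_ite_of_lt_of_le hj (by omega)]
  grind (splits := 40) [cycleColorSeq]

theorem cycleColorSeq_not_alternating {m j : ℕ} (hm : 3 ≤ m) (h5 : m ≠ 5) (hj : j < m) :
    ¬ (cycleColorSeq m j = cycleColorSeq m ((j + 2) % m) ∧
      cycleColorSeq m ((j + 1) % m) = cycleColorSeq m ((j + 3) % m)) := by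
  rw [Nat.add_mod_eq_ite_of_lt_of_le hj (by omega), Nat.add_mod_eq_ite_of_lt_of_le hj (by omega),
    Nat.add_mod_eq_ite_of_lt_of_le hj (by omega)]
  grind (splits := 40) [cycleColorSeq]

theorem isStarColoringSeq_cycleColorSeq (h5 : n + 3 ≠ 5) :
    IsStarColoringSeq fun i : Fin (n + 3) ↦
      (⟨cycleColorSeq (n + 3) i, cycleColorSeq_lt_three _ _⟩ : Fin 3) := by
  refine ⟨fun i ↦ ?_, fun i ↦ ?_⟩
  · simpa [Fin.ext_iff, Fin.val_add] using cycleColorSeq_ne_add_one (by omega) i.isLt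
  · simpa [Fin.ext_iff, Fin.val_add] using cycleColorSeq_not_alternating (by omega) h5 i.isLt

theorem star_chromatic_index_cycle (n : ℕ) (hn : 3 ≤ n) :
    (n ≠ 5 → starChromaticIndex (cycleGraph n) = 3) ∧
    (n = 5 → starChromaticIndex (cycleGraph n) = 4) := by
  obtain ⟨n, rfl⟩ := Nat.exists_eq_add_of_le' hn
  refine ⟨fun h5 ↦ starChromaticIndex_cycleGraph_eq_succ_iff.2
    ⟨⟨_, isStarColoringSeq_cycleColorSeq h5⟩, fun ⟨f, hf⟩ ↦ not_isStarColoringSeq_fin_two f hf⟩,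
    fun h5 ↦ ?_⟩
  obtain rfl : n = 2 := by omega
  exact starChromaticIndex_cycleGraph_eq_succ_iff.2
    ⟨⟨_, isStarColoringSeq_five_four⟩, fun ⟨f, hf⟩ ↦ not_isStarColoringSeq_five_three f hf⟩
end

section
/- For every integer n ≥ 1, the star chromatic index of the complete bipartite graph K_{2,n} equals 2n − ⌊n/2⌋. -/
open SimpleGraph

namespace StarK2n

variable {n : ℕ}

/-- The color value of the edge between `Sum.inl i` and `Sum.inr u`. -/
def colv (i : Fin 2) (u : Fin n) : ℕ := 3 * (u.1 / 2) + u.1 % 2 + i.1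

lemma colv_lt (hn : 1 ≤ n) (i : Fin 2) (u : Fin n) : colv i u < 2 * n - n / 2 := by
  have h1 := u.2; have h2 := i.2; unfold colv; omega

/-- The symmetric two-variable color function. -/
def colf (hn : 1 ≤ n) : Fin 2 ⊕ Fin n → Fin 2 ⊕ Fin n → Fin (2 * n - n / 2) :=
  fun x y =>
    match x, y with
    | .inl i, .inr u => ⟨colv i u, colv_lt hn i u⟩
    | .inr u, .inl i => ⟨colv i u, colv_lt hn i u⟩
    | _, _ => ⟨0, by omega⟩

lemma colf_symm (hn : 1 ≤ n) (x y : Fin 2 ⊕ Fin n) : colf hn x y = colf hn y x := by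
  rcases x with i | u <;> rcases y with j | w <;> rfl

/-- The star edge-coloring of `K_{2,n}`. -/
def col (hn : 1 ≤ n) : Sym2 (Fin 2 ⊕ Fin n) → Fin (2 * n - n / 2) :=
  Sym2.lift ⟨colf hn, colf_symm hn⟩

lemma col_mk (hn : 1 ≤ n) (x y : Fin 2 ⊕ Fin n) : col hn s(x, y) = colf hn x y := rfl

lemma starB (a0 b0 a2 b2 a4 b4 i1 i3 : ℕ) (h13 : i1 ≠ i3) (hi1 : i1 < 2) (hi3 : i3 < 2)
    (hb0 : b0 < 2) (hb2 : b2 < 2) (hb4 : b4 < 2) :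
    ¬(3*a0+b0+i1 = 3*a2+b2+i3 ∧ 3*a2+b2+i1 = 3*a4+b4+i3) := by omega

lemma proper_aux (hn : 1 ≤ n) (i i' : Fin 2) (w w' : Fin n)
    (hne : s(Sum.inl i, Sum.inr w) ≠ (s(Sum.inl i', Sum.inr w') : Sym2 (Fin 2 ⊕ Fin n)))
    (hv : ∃ v, (v = Sum.inl i ∨ v = Sum.inr w) ∧ (v = Sum.inl i' ∨ v = Sum.inr w')) :
    col hn s(Sum.inl i, Sum.inr w) ≠ col hn s(Sum.inl i', Sum.inr w') := by
  intro hcol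
  simp only [col_mk, colf, Fin.mk.injEq, colv] at hcol
  obtain ⟨v, hv1, hv2⟩ := hv
  rcases hv1 with rfl | rfl <;> rcases hv2 with h2 | h2
  · obtain rfl := Sum.inl_injective h2
    exact hne (by rw [show w = w' from Fin.ext (by omega)])
  · exact absurd h2 (by simp)
  · exact absurd h2 (by simp)
  · obtain rfl := Sum.inr_injective h2
    have hi := i.2; have hi' := i'.2
    exact hne (by rw [show i = i' from Fin.ext (by omega)])

lemma col_star (hn : 1 ≤ n) :
    IsStarEdgeColoring (completeBipartiteGraph (Fin 2) (Fin n)) (col hn) := by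
  constructor
  · intro e f he hf hne hv
    induction e using Sym2.ind with | _ x y =>
    induction f using Sym2.ind with | _ x' y' =>
    rw [mem_edgeSet] at he hf
    obtain ⟨v, hv1, hv2⟩ := hv
    rw [Sym2.mem_iff] at hv1 hv2
    rcases x with i | u <;> rcases y with j | w <;> simp at he <;>
      rcases x' with i' | u' <;> rcases y' with j' | w' <;> simp at hf <;>
      [skip; rw [Sym2.eq_swap (a := Sum.inr u') (b := Sum.inl j')] at hne ⊢;
       rw [Sym2.eq_swap (a := Sum.inr u) (b := Sum.inl j)] at hne ⊢;
       rw [Sym2.eq_swap (a := Sum.inr u) (b := Sum.inl j),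
           Sym2.eq_swap (a := Sum.inr u') (b := Sum.inl j')] at hne ⊢] <;>
      exact proper_aux hn _ _ _ _ hne ⟨v, by tauto, by tauto⟩
  · intro v0 v1 v2 v3 v4 h01 h12 h23 h34 h02 h03 h13 h14 h24
    rcases v0 with i0 | u0 <;> rcases v1 with i1 | u1 <;> rcases v2 with i2 | u2 <;>
      rcases v3 with i3 | u3 <;> rcases v4 with i4 | u4 <;>
      simp only [completeBipartiteGraph_adj] at h01 h12 h23 h34 <;>
      first
        | (exfalso; simp at h01 h12 h23 h34; done)
        | skip
    · -- path inl, inr, inl, inr, inl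
      rintro ⟨hA, hB⟩
      simp only [col_mk, colf, colv, Fin.mk.injEq] at hA hB
      have hi0 := i0.2; have hi2 := i2.2; have hi4 := i4.2
      simp only [ne_eq, Sum.inl.injEq, Fin.ext_iff] at h02 h24
      omega
    · -- path inr, inl, inr, inl, inr
      rintro ⟨hA, hB⟩
      simp only [col_mk, colf, colv, Fin.mk.injEq] at hA hB
      simp only [ne_eq, Sum.inl.injEq, Fin.ext_iff] at h13
      exact starB (u0.1/2) (u0.1%2) (u2.1/2) (u2.1%2) (u4.1/2) (u4.1%2) i1.1 i3.1
        h13 i1.2 i3.2 (Nat.mod_lt _ (by norm_num)) (Nat.mod_lt _ (by norm_num))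
        (Nat.mod_lt _ (by norm_num)) ⟨hA, hB⟩


lemma lower_bound (hn : 1 ≤ n) {k : ℕ} (c : Sym2 (Fin 2 ⊕ Fin n) → Fin k)
    (hc : IsStarEdgeColoring (completeBipartiteGraph (Fin 2) (Fin n)) c) :
    2 * n - n / 2 ≤ k := by
  classical
  have hne : Nonempty (Fin n) := ⟨⟨0, hn⟩⟩
  have hadj : ∀ (i : Fin 2) (u : Fin n),
      (completeBipartiteGraph (Fin 2) (Fin n)).Adj (Sum.inl i) (Sum.inr u) := by simp
  have hedge : ∀ (i : Fin 2) (u : Fin n),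
      s(Sum.inl i, Sum.inr u) ∈ (completeBipartiteGraph (Fin 2) (Fin n)).edgeSet :=
    fun i u => (mem_edgeSet _).mpr (hadj i u)
  set fA : Fin n → Fin k := fun u => c s(Sum.inl 0, Sum.inr u) with hfA
  set fB : Fin n → Fin k := fun u => c s(Sum.inl 1, Sum.inr u) with hfB
  have hAinj : Function.Injective fA := by
    intro u u' h
    by_contra hne
    refine hc.1 (hedge 0 u) (hedge 0 u') ?_ ⟨Sum.inl 0, by simp, by simp⟩ h
    intro heq
    apply hne
    have := (Sym2.eq_iff.mp heq)
    simp at this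
    exact this
  have hBinj : Function.Injective fB := by
    intro u u' h
    by_contra hne
    refine hc.1 (hedge 1 u) (hedge 1 u') ?_ ⟨Sum.inl 1, by simp, by simp⟩ h
    intro heq
    apply hne
    have := (Sym2.eq_iff.mp heq)
    simp at this
    exact this
  have hABne : ∀ u : Fin n, fA u ≠ fB u := by
    intro u
    refine hc.1 (hedge 0 u) (hedge 1 u) ?_ ⟨Sum.inr u, by simp, by simp⟩
    intro heq
    have := (Sym2.eq_iff.mp heq)
    simp at this
  have key : ∀ u u' : Fin n, u ≠ u' → fA u = fB u' → ∀ u'', fA u' ≠ fB u'' := by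
    intro u u' huu' h u'' h2
    by_cases h'' : u'' = u'
    · exact hABne u' (h'' ▸ h2)
    · refine hc.2 (Sum.inr u) (Sum.inl 0) (Sum.inr u') (Sum.inl 1) (Sum.inr u'')
        ((hadj 0 u).symm) (hadj 0 u') ((hadj 1 u').symm) (hadj 1 u'')
        (by simp [huu']) (by simp) (by simp) (by simp)
        (by simp only [ne_eq, Sum.inr.injEq]; exact fun hh => h'' hh.symm) ?_
      constructor
      · rw [Sym2.eq_swap (a := Sum.inr u), Sym2.eq_swap (a := Sum.inr u')]; exact h
      · exact h2
  set A : Finset (Fin k) := Finset.image fA Finset.univ with hA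
  set B : Finset (Fin k) := Finset.image fB Finset.univ with hB
  have hAcard : A.card = n := by
    rw [hA, Finset.card_image_of_injective _ hAinj, Finset.card_univ, Fintype.card_fin]
  have hBcard : B.card = n := by
    rw [hB, Finset.card_image_of_injective _ hBinj, Finset.card_univ, Fintype.card_fin]
  have hUnion : (A ∪ B).card ≤ k := le_trans (Finset.card_le_univ _) (by simp)
  set φ : Fin k → Fin k := fun x => fA (Function.invFun fB x) with hφ
  have hφmem : ∀ x ∈ A ∩ B, φ x ∈ A \ B := by
    intro x hx
    rw [Finset.mem_inter] at hx
    obtain ⟨u, -, hu⟩ := Finset.mem_image.mp hx.1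
    obtain ⟨u', -, hu'⟩ := Finset.mem_image.mp hx.2
    have hinv : fB (Function.invFun fB x) = x := Function.invFun_eq ⟨u', hu'⟩
    have huw : u ≠ Function.invFun fB x := by
      intro hh
      apply hABne u
      rw [hu, hh, hinv]
    have hk := key u _ huw (hu.trans hinv.symm)
    rw [Finset.mem_sdiff]
    refine ⟨Finset.mem_image.mpr ⟨_, Finset.mem_univ _, rfl⟩, ?_⟩
    intro hmem
    obtain ⟨u'', -, hu''⟩ := Finset.mem_image.mp hmem
    exact hk u'' hu''.symm
  have hφinj : Set.InjOn φ ↑(A ∩ B) := by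
    intro x hx y hy hxy
    rw [Finset.coe_inter] at hx hy
    have hx2 : x ∈ B := Finset.mem_coe.mp hx.2
    have hy2 : y ∈ B := Finset.mem_coe.mp hy.2
    obtain ⟨u', -, hu'⟩ := Finset.mem_image.mp hx2
    obtain ⟨w', -, hw'⟩ := Finset.mem_image.mp hy2
    have h1 : fB (Function.invFun fB x) = x := Function.invFun_eq ⟨u', hu'⟩
    have h2 : fB (Function.invFun fB y) = y := Function.invFun_eq ⟨w', hw'⟩
    rw [← h1, ← h2, hAinj hxy]
  have hcard : (A ∩ B).card ≤ (A \ B).card :=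
    Finset.card_le_card_of_injOn φ hφmem hφinj
  have h1 : (A ∩ B).card + (A \ B).card = A.card := Finset.card_inter_add_card_sdiff A B
  have h2 : (A ∪ B).card + (A ∩ B).card = A.card + B.card :=
    Finset.card_union_add_card_inter A B
  omega

end StarK2n

theorem star_chromatic_index_K2n (n : ℕ) (hn : 1 ≤ n) :
    starChromaticIndex (completeBipartiteGraph (Fin 2) (Fin n)) = 2 * n - n / 2 := by
  refine le_antisymm (Nat.sInf_le ⟨StarK2n.col hn, StarK2n.col_star hn⟩)
    (le_csInf ⟨_, ⟨StarK2n.col hn, StarK2n.col_star hn⟩⟩ ?_)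
  rintro k ⟨c, hc⟩
  exact StarK2n.lower_bound hn c hc
end

section
/- The star chromatic index of the complete bipartite graph K_{3,4} equals 7. -/
open SimpleGraph

namespace StarK34

open Sum

abbrev V34 := Fin 3 ⊕ Fin 4
abbrev G34 := completeBipartiteGraph (Fin 3) (Fin 4)

instance : DecidableRel G34.Adj :=
  fun v w => decidable_of_iff _ (completeBipartiteGraph_adj (Fin 3) (Fin 4) v w).to_iff.symm

/-! ### Upper bound: an explicit star `7`-edge-coloring -/

def M7 : Fin 3 → Fin 4 → Fin 7 := ![![0,1,2,3],![1,4,3,5],![2,6,4,1]]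

def f7 : V34 → V34 → Fin 7
  | inl i, inr j => M7 i j
  | inr j, inl i => M7 i j
  | _, _ => 0

def c7 : Sym2 V34 → Fin 7 := Sym2.lift ⟨f7, by decide⟩

set_option maxHeartbeats 4000000 in
set_option synthInstance.maxSize 3000 in
set_option synthInstance.maxHeartbeats 2000000 in
theorem h7 : IsStarEdgeColoring G34 c7 := by
  unfold IsStarEdgeColoring
  decide

/-! ### Lower bound: there is no star `6`-edge-coloring -/

def rowOK (r s : Fin 4 → Fin 6) : Prop :=
  (∀ j, r j ≠ s j) ∧
  (∀ j k l : Fin 4, j ≠ k → k ≠ l →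
    ¬(r j = s k ∧ r k = s l) ∧ ¬(s j = r k ∧ s k = r l))

def tripleOK (r s t : Fin 4 → Fin 6) : Prop :=
  ∀ j k : Fin 4, j ≠ k → ¬(r j = s k ∧ s j = t k)

def e0 : Fin 4 → Fin 6 := fun j => j.castLE (by norm_num)

instance : ∀ r s, Decidable (rowOK r s) := fun r s => by unfold rowOK; infer_instance
instance : ∀ r s t, Decidable (tripleOK r s t) := fun r s t => by unfold tripleOK; infer_instance

set_option maxHeartbeats 10000000 in
set_option maxRecDepth 10000 in
set_option synthInstance.maxSize 10000 in
set_option synthInstance.maxHeartbeats 2000000 in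
theorem NS : ∀ b0 : Fin 6, b0 ≠ e0 0 → ∀ b1, b1 ≠ e0 1 → b1 ≠ b0 →
    ∀ b2, b2 ≠ e0 2 → b2 ≠ b0 → b2 ≠ b1 →
    ∀ b3, b3 ≠ e0 3 → b3 ≠ b0 → b3 ≠ b1 → b3 ≠ b2 →
    rowOK e0 ![b0,b1,b2,b3] →
    ∀ c0, c0 ≠ e0 0 → c0 ≠ b0 →
    ∀ c1, c1 ≠ e0 1 → c1 ≠ b1 → c1 ≠ c0 →
    ∀ c2, c2 ≠ e0 2 → c2 ≠ b2 → c2 ≠ c0 → c2 ≠ c1 →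
    ∀ c3, c3 ≠ e0 3 → c3 ≠ b3 → c3 ≠ c0 → c3 ≠ c1 → c3 ≠ c2 →
    rowOK e0 ![c0,c1,c2,c3] → rowOK ![b0,b1,b2,b3] ![c0,c1,c2,c3] →
    tripleOK e0 ![b0,b1,b2,b3] ![c0,c1,c2,c3] →
    tripleOK e0 ![c0,c1,c2,c3] ![b0,b1,b2,b3] →
    tripleOK ![b0,b1,b2,b3] e0 ![c0,c1,c2,c3] →
    tripleOK ![b0,b1,b2,b3] ![c0,c1,c2,c3] e0 →
    tripleOK ![c0,c1,c2,c3] e0 ![b0,b1,b2,b3] →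
    tripleOK ![c0,c1,c2,c3] ![b0,b1,b2,b3] e0 → False := by decide

lemma e0_injective : Function.Injective e0 :=
  fun a b h => Fin.castLE_injective _ h

/-- Any injective map `Fin 4 → Fin 6` can be normalized by a permutation of colors. -/
lemma exists_perm (f : Fin 4 → Fin 6) (hf : Function.Injective f) :
    ∃ σ : Equiv.Perm (Fin 6), ∀ j, σ (f j) = e0 j := by
  classical
  let ep : (Set.range f) ≃ (Set.range e0) :=
    (Equiv.ofInjective f hf).symm.trans (Equiv.ofInjective e0 e0_injective)
  have hcard : Fintype.card {x : Fin 6 // ¬ x ∈ Set.range f}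
      = Fintype.card {x : Fin 6 // ¬ x ∈ Set.range e0} := by
    rw [Fintype.card_subtype_compl, Fintype.card_subtype_compl]
    congr 1
    rw [show Fintype.card {x : Fin 6 // x ∈ Set.range f}
        = Fintype.card (Set.range f) from Fintype.card_congr (Equiv.refl _),
      show Fintype.card {x : Fin 6 // x ∈ Set.range e0}
        = Fintype.card (Set.range e0) from Fintype.card_congr (Equiv.refl _),
      Set.card_range_of_injective hf, Set.card_range_of_injective e0_injective]
  let en : {x : Fin 6 // ¬ x ∈ Set.range f} ≃ {x : Fin 6 // ¬ x ∈ Set.range e0} :=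
    Fintype.equivOfCardEq hcard
  refine ⟨Equiv.subtypeCongr ep en, fun j => ?_⟩
  have hmem : f j ∈ Set.range f := ⟨j, rfl⟩
  have : Equiv.subtypeCongr ep en (f j) = (ep ⟨f j, hmem⟩ : Fin 6) := by
    simp [Equiv.subtypeCongr, hmem]
  rw [this]
  show ((Equiv.ofInjective e0 e0_injective) ((Equiv.ofInjective f hf).symm ⟨f j, hmem⟩) : Fin 6) = e0 j
  have : (Equiv.ofInjective f hf).symm ⟨f j, hmem⟩ = j := by
    rw [Equiv.symm_apply_eq]
    rfl
  rw [this]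
  rfl

lemma no6 : ¬ ∃ c : Sym2 V34 → Fin 6, IsStarEdgeColoring G34 c := by
  rintro ⟨c, hp, hs⟩
  have hadj : ∀ (i : Fin 3) (j : Fin 4), G34.Adj (inl i) (inr j) := by
    intro i j; simp
  have hedge : ∀ (i : Fin 3) (j : Fin 4), s(inl i, inr j) ∈ G34.edgeSet := by
    intro i j; rw [SimpleGraph.mem_edgeSet]; exact hadj i j
  have hf : Function.Injective (fun j : Fin 4 => c s(inl 0, inr j)) := by
    intro a b h
    by_contra hab
    exact hp (hedge 0 a) (hedge 0 b)
      (by simp [Sym2.eq_iff, hab]) ⟨inl 0, by simp, by simp⟩ h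
  obtain ⟨σ, hσ⟩ := exists_perm _ hf
  set d : Fin 3 → Fin 4 → Fin 6 := fun i j => σ (c s(inl i, inr j)) with hd
  have h0 : e0 = d 0 := by funext j; exact (hσ j).symm
  have hrow : ∀ (i : Fin 3) (j k : Fin 4), j ≠ k → d i j ≠ d i k := by
    intro i j k hjk h
    exact hp (hedge i j) (hedge i k) (by simp [Sym2.eq_iff, hjk])
      ⟨inl i, by simp, by simp⟩ (σ.injective h)
  have hcol : ∀ (j : Fin 4) (i i' : Fin 3), i ≠ i' → d i j ≠ d i' j := by
    intro j i i' hii' h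
    exact hp (hedge i j) (hedge i' j) (by simp [Sym2.eq_iff, hii'])
      ⟨inr j, by simp, by simp⟩ (σ.injective h)
  have hB : ∀ (i i' : Fin 3), i ≠ i' → ∀ (j k l : Fin 4), j ≠ k → k ≠ l →
      ¬(d i j = d i' k ∧ d i k = d i' l) := by
    intro i i' hii' j k l hjk hkl ⟨h1, h2⟩
    refine hs (inr j) (inl i) (inr k) (inl i') (inr l)
      ((G34.adj_symm (hadj i j))) (hadj i k) (G34.adj_symm (hadj i' k)) (hadj i' l)
      (by simp [hjk]) (by simp) (by simp [hii']) (by simp) (by simp [hkl]) ?_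
    constructor
    · have := σ.injective h1
      rw [Sym2.eq_swap (a := inr j)] at *
      convert this using 2 <;> rw [Sym2.eq_swap]
    · exact σ.injective h2
  have hrowOK : ∀ (i i' : Fin 3), i ≠ i' → rowOK (d i) (d i') := by
    intro i i' hii'
    refine ⟨fun j => hcol j i i' hii', fun j k l hjk hkl => ⟨hB i i' hii' j k l hjk hkl, hB i' i (Ne.symm hii') j k l hjk hkl⟩⟩
  have htriple : ∀ (a b c' : Fin 3), a ≠ b → b ≠ c' → tripleOK (d a) (d b) (d c') := by
    intro a b c' hab hbc j k hjk ⟨h1, h2⟩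
    refine hs (inl a) (inr j) (inl b) (inr k) (inl c')
      (hadj a j) (G34.adj_symm (hadj b j)) (hadj b k) (G34.adj_symm (hadj c' k))
      (by simp [hab]) (by simp) (by simp [hjk]) (by simp) (by simp [hbc]) ?_
    refine ⟨σ.injective h1, ?_⟩
    have := σ.injective h2
    convert this using 2 <;> rw [Sym2.eq_swap]
  have hb : ![d 1 0, d 1 1, d 1 2, d 1 3] = d 1 := by
    funext j; fin_cases j <;> rfl
  have hc : ![d 2 0, d 2 1, d 2 2, d 2 3] = d 2 := by
    funext j; fin_cases j <;> rfl
  refine NS (d 1 0) ?_ (d 1 1) ?_ ?_ (d 1 2) ?_ ?_ ?_ (d 1 3) ?_ ?_ ?_ ?_ ?_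
    (d 2 0) ?_ ?_ (d 2 1) ?_ ?_ ?_ (d 2 2) ?_ ?_ ?_ ?_ (d 2 3) ?_ ?_ ?_ ?_ ?_ ?_ ?_ ?_ ?_ ?_ ?_ ?_ ?_ <;>
    (try simp only [hb, hc, h0]) <;>
    first
      | exact hrow _ _ _ (by decide)
      | exact hcol _ _ _ (by decide)
      | exact hrowOK _ _ (by decide)
      | exact htriple _ _ _ (by decide) (by decide)

/-- Monotonicity: a star coloring with `m` colors gives one with `k ≥ m` colors. -/
lemma mono {m k : ℕ} (h : m ≤ k)
    (hm : ∃ c : Sym2 V34 → Fin m, IsStarEdgeColoring G34 c) :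
    ∃ c : Sym2 V34 → Fin k, IsStarEdgeColoring G34 c := by
  obtain ⟨c, h1, h2⟩ := hm
  refine ⟨fun e => (c e).castLE h, fun e f he hf hef hv hEq => h1 he hf hef hv (Fin.castLE_injective h hEq),
    fun v0 v1 v2 v3 v4 a1 a2 a3 a4 n1 n2 n3 n4 n5 => ?_⟩
  rintro ⟨q1, q2⟩
  exact h2 v0 v1 v2 v3 v4 a1 a2 a3 a4 n1 n2 n3 n4 n5
    ⟨Fin.castLE_injective h q1, Fin.castLE_injective h q2⟩

end StarK34

theorem star_chromatic_index_K34 :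
    starChromaticIndex (completeBipartiteGraph (Fin 3) (Fin 4)) = 7 := by
  unfold starChromaticIndex
  set S := {k | ∃ c : Sym2 (Fin 3 ⊕ Fin 4) → Fin k,
    IsStarEdgeColoring (completeBipartiteGraph (Fin 3) (Fin 4)) c} with hS
  have h7 : 7 ∈ S := ⟨StarK34.c7, StarK34.h7⟩
  have hle : sInf S ≤ 7 := Nat.sInf_le h7
  have hmem : sInf S ∈ S := Nat.sInf_mem ⟨7, h7⟩
  rcases Nat.lt_or_ge (sInf S) 7 with hlt | hge
  · exfalso
    exact StarK34.no6 (StarK34.mono (by omega : sInf S ≤ 6) hmem)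
  · omega
end

section
/- For every n ≥ 1, the star chromatic index of the complete graph K_n is at least 3n(n−1)/(n+4). -/
open SimpleGraph

/-!
Let `c` be a star edge-coloring of `K_n` with `k` colors and let `r j` be the number of ordered
pairs spanning an edge of color `j`, i.e. the number of vertices covered by the matching of color
`j`; `∑ r j = n (n - 1)`. There are `∑ r j (r j - 2)` ordered pairs of oriented edges `ax`, `yz`
lying on distinct edges of the same color. Send such a pair to `(a, xy)`: this is injective, as
`z` is the partner of `y` in the color of `ax`; moreover `a` is not covered by the color of `xy`,
and `(a, xy)`, `(a, yx)` are never both hit, since otherwise a bicolored path with four edges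
appears. Hence `2 ∑ r j (r j - 2) ≤ ∑ r j (n - r j)`, that is
`3 ∑ r j ^ 2 ≤ (n + 4) ∑ r j`, and Cauchy–Schwarz `(∑ r j) ^ 2 ≤ k ∑ r j ^ 2` gives
`3 n (n - 1) ≤ k (n + 4)`.
-/

namespace IsStarEdgeColoring

variable {V : Type*} {k : ℕ} {c : Sym2 V → Fin k}

theorem of_injective (G : SimpleGraph V) (hc : Function.Injective c) :
    IsStarEdgeColoring G c := by
  refine ⟨fun e f _ _ hef _ h => hef (hc h), ?_⟩
  intro v0 v1 v2 v3 v4 _ _ _ _ h02 h03 _ _ _ h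
  rcases Sym2.eq_iff.mp (hc h.1) with ⟨h, -⟩ | ⟨h, -⟩
  exacts [h02 h, h03 h]

theorem eq_of_color_eq (hc : IsStarEdgeColoring (completeGraph V) c) {a b d : V}
    (hab : a ≠ b) (had : a ≠ d) (h : c s(a, b) = c s(a, d)) : b = d := by
  by_contra hbd
  refine hc.1 hab had ?_ ⟨a, Sym2.mem_mk_left a b, Sym2.mem_mk_left a d⟩ h
  simp [hbd, had]

end IsStarEdgeColoring

theorem exists_isStarEdgeColoring_starChromaticIndex {V : Type*} [Finite V] (G : SimpleGraph V) :
    ∃ c : Sym2 V → Fin (starChromaticIndex G), IsStarEdgeColoring G c := by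
  obtain ⟨m, ⟨e⟩⟩ := Finite.exists_equiv_fin (Sym2 V)
  exact Nat.sInf_mem (s := {k | ∃ c : Sym2 V → Fin k, IsStarEdgeColoring G c})
    ⟨m, e, .of_injective G e.injective⟩

theorem mul_sum_le_card_mul_of_mul_sum_sq_le {ι : Type*} [Fintype ι] (r : ι → ℕ) {a b : ℕ}
    (h : a * ∑ i, r i ^ 2 ≤ b * ∑ i, r i) : a * ∑ i, r i ≤ Fintype.card ι * b := by
  rcases Nat.eq_zero_or_pos (∑ i, r i) with h0 | hpos
  · simp [h0]
  refine Nat.le_of_mul_le_mul_right ?_ hpos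
  calc a * (∑ i, r i) * ∑ i, r i = a * (∑ i, r i) ^ 2 := by ring
    _ ≤ a * (Fintype.card ι * ∑ i, r i ^ 2) := by
        gcongr; simpa using sq_sum_le_card_mul_sum_sq (s := Finset.univ) (f := r)
    _ = Fintype.card ι * (a * ∑ i, r i ^ 2) := by ring
    _ ≤ Fintype.card ι * (b * ∑ i, r i) := by gcongr
    _ = Fintype.card ι * b * ∑ i, r i := by ring

theorem three_mul_sum_sq_le {ι : Type*} [Fintype ι] (r : ι → ℕ) {n : ℕ}
    (hr : ∀ i, r i ≤ n)
    (h : 2 * ∑ i, r i * (r i - 2) ≤ ∑ i, r i * (n - r i)) :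
    3 * ∑ i, r i ^ 2 ≤ (n + 4) * ∑ i, r i := by
  have hsq : ∑ i, r i ^ 2 ≤ ∑ i, r i * (r i - 2) + 2 * ∑ i, r i := by
    rw [Finset.mul_sum, ← Finset.sum_add_distrib]
    gcongr with i
    rcases le_or_gt 2 (r i) with h2 | h2
    · zify [h2]; linarith
    · interval_cases r i <;> simp
  have hlin : ∑ i, r i * (n - r i) + ∑ i, r i ^ 2 = n * ∑ i, r i := by
    rw [Finset.mul_sum, ← Finset.sum_add_distrib]
    refine Finset.sum_congr rfl fun i _ => ?_
    zify [hr i]; ring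
  linarith

section CompleteGraph

open Finset

variable {V : Type*} [Fintype V] {k : ℕ}

def colorDarts (c : Sym2 V → Fin k) (j : Fin k) : Finset (V × V) :=
  {p ∈ univ.offDiag | c s(p.1, p.2) = j}

variable {c : Sym2 V → Fin k}

@[simp]
theorem mem_colorDarts {j : Fin k} {p : V × V} :
    p ∈ colorDarts c j ↔ p.1 ≠ p.2 ∧ c s(p.1, p.2) = j := by
  simp [colorDarts]

theorem sum_card_colorDarts (c : Sym2 V → Fin k) :
    ∑ j, #(colorDarts c j) = Fintype.card V * Fintype.card V - Fintype.card V := by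
  rw [← card_univ, ← offDiag_card]
  exact (card_eq_sum_card_fiberwise fun _ _ => mem_univ _).symm

variable [DecidableEq V]

def coveredBy (c : Sym2 V → Fin k) (j : Fin k) : Finset V :=
  (colorDarts c j).image Prod.fst

def sameColorPairs (c : Sym2 V → Fin k) : Finset ((V × V) × (V × V)) :=
  {q ∈ univ.offDiag ×ˢ univ.offDiag | c s(q.1.1, q.1.2) = c s(q.2.1, q.2.2) ∧
    s(q.1.1, q.1.2) ≠ s(q.2.1, q.2.2)}

def uncoveredPairs (c : Sym2 V → Fin k) : Finset (V × (V × V)) :=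
  {q ∈ univ ×ˢ univ.offDiag | q.1 ∉ coveredBy c (c s(q.2.1, q.2.2))}

theorem card_filter_colorDarts_ne {j : Fin k} {p : V × V} (hp : p ∈ colorDarts c j) :
    #{q ∈ colorDarts c j | s(q.1, q.2) ≠ s(p.1, p.2)} = #(colorDarts c j) - 2 := by
  have hswap : p.swap ∈ colorDarts c j := by
    simpa [Sym2.eq_swap, eq_comm (a := p.2)] using hp
  have hfilter :
      {q ∈ colorDarts c j | s(q.1, q.2) ≠ s(p.1, p.2)} = colorDarts c j \ {p, p.swap} := by
    ext q
    simp [and_comm]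
  rw [hfilter, card_sdiff_of_subset (insert_subset hp (singleton_subset_iff.mpr hswap)),
    card_pair]
  intro h
  exact (mem_colorDarts.mp hp).1 congr(Prod.fst $h)

theorem card_sameColorPairs (c : Sym2 V → Fin k) :
    #(sameColorPairs c) = ∑ j, #(colorDarts c j) * (#(colorDarts c j) - 2) := by
  calc #(sameColorPairs c)
      = ∑ p ∈ univ.offDiag,
          #{q ∈ colorDarts c (c s(p.1, p.2)) | s(q.1, q.2) ≠ s(p.1, p.2)} := by
        rw [sameColorPairs, card_filter, sum_product]
        refine sum_congr rfl fun p _ => ?_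
        rw [← card_filter, colorDarts, filter_filter]
        congr 1
        ext q
        simp only [mem_filter, eq_comm, ne_comm]
    _ = ∑ j, ∑ p ∈ colorDarts c j, (#(colorDarts c j) - 2) := by
        rw [← sum_fiberwise univ.offDiag (fun p => c s(p.1, p.2))]
        refine sum_congr rfl fun j _ => sum_congr rfl fun p hp => ?_
        have hp : p ∈ colorDarts c j := hp
        rw [(mem_colorDarts.mp hp).2]
        exact card_filter_colorDarts_ne hp
    _ = ∑ j, #(colorDarts c j) * (#(colorDarts c j) - 2) := by simp

@[simp]
theorem mem_coveredBy {j : Fin k} {a : V} :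
    a ∈ coveredBy c j ↔ ∃ w, a ≠ w ∧ c s(a, w) = j := by
  simp [coveredBy]

@[simp]
theorem mem_sameColorPairs {a x y z : V} : ((a, x), (y, z)) ∈ sameColorPairs c ↔
    a ≠ x ∧ y ≠ z ∧ c s(a, x) = c s(y, z) ∧ s(a, x) ≠ s(y, z) := by
  simp [sameColorPairs, and_assoc]

@[simp]
theorem mem_uncoveredPairs {a x y : V} :
    (a, (x, y)) ∈ uncoveredPairs c ↔ x ≠ y ∧ a ∉ coveredBy c (c s(x, y)) := by
  simp [uncoveredPairs]

theorem mem_uncoveredPairs_comm {a x y : V} :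
    (a, (x, y)) ∈ uncoveredPairs c ↔ (a, (y, x)) ∈ uncoveredPairs c := by
  simp [ne_comm, Sym2.eq_swap]

theorem card_uncoveredPairs (c : Sym2 V → Fin k) :
    #(uncoveredPairs c) = ∑ j, #(colorDarts c j) * (Fintype.card V - #(coveredBy c j)) := by
  calc #(uncoveredPairs c)
      = ∑ p ∈ univ.offDiag, #(coveredBy c (c s(p.1, p.2)))ᶜ := by
        rw [uncoveredPairs, card_filter, sum_product_right]
        refine sum_congr rfl fun p _ => ?_
        rw [← card_filter]
        congr 1
        ext a
        simp only [mem_filter, mem_univ, true_and, mem_compl]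
    _ = ∑ j, ∑ p ∈ colorDarts c j, (Fintype.card V - #(coveredBy c j)) := by
        rw [← sum_fiberwise univ.offDiag (fun p => c s(p.1, p.2))]
        refine sum_congr rfl fun j _ => sum_congr rfl fun p hp => ?_
        have hp : p ∈ colorDarts c j := hp
        rw [(mem_colorDarts.mp hp).2, card_compl]
    _ = ∑ j, #(colorDarts c j) * (Fintype.card V - #(coveredBy c j)) := by simp

namespace IsStarEdgeColoring

theorem card_coveredBy (hc : IsStarEdgeColoring (completeGraph V) c) (j : Fin k) :
    #(coveredBy c j) = #(colorDarts c j) := by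
  refine card_image_of_injOn ?_
  rintro ⟨a, b⟩ hb ⟨_, d⟩ hd (rfl : a = _)
  simp only [mem_coe, mem_colorDarts] at hb hd
  rw [hc.eq_of_color_eq hb.1 hd.1 (hb.2.trans hd.2.symm)]

theorem disjoint_of_mem_sameColorPairs (hc : IsStarEdgeColoring (completeGraph V) c)
    {a x y z : V} (h : ((a, x), (y, z)) ∈ sameColorPairs c) :
    a ≠ y ∧ a ≠ z ∧ x ≠ y ∧ x ≠ z := by
  obtain ⟨hax, hyz, hcol, hne⟩ := mem_sameColorPairs.mp h
  have hnot : ∀ v, v ∈ s(a, x) → v ∉ s(y, z) := fun v hv hv' =>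
    hc.1 hax hyz hne ⟨v, hv, hv'⟩ hcol
  refine ⟨?_, ?_, ?_, ?_⟩ <;> rintro rfl <;> simp at hnot

theorem mem_uncoveredPairs_of_mem_sameColorPairs (hc : IsStarEdgeColoring (completeGraph V) c)
    {a x y z : V} (h : ((a, x), (y, z)) ∈ sameColorPairs c) :
    (a, (x, y)) ∈ uncoveredPairs c := by
  obtain ⟨hax, hyz, hcol, -⟩ := mem_sameColorPairs.mp h
  obtain ⟨hay, haz, hxy, hxz⟩ := hc.disjoint_of_mem_sameColorPairs h
  refine mem_uncoveredPairs.mpr ⟨hxy, ?_⟩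
  rw [mem_coveredBy]
  rintro ⟨w, haw, hw⟩
  by_cases hwx : w = x
  · subst hwx
    rw [Sym2.eq_swap] at hw
    exact hay (hc.eq_of_color_eq hax.symm hxy hw)
  by_cases hwy : w = y
  · subst hwy
    rw [Sym2.eq_swap, Sym2.eq_swap (a := x)] at hw
    exact hax (hc.eq_of_color_eq hay.symm hxy.symm hw)
  refine hc.2 w a x y z (Ne.symm haw) hax hxy hyz hwx hwy hay haz hxz ⟨?_, hcol⟩
  rw [Sym2.eq_swap, hw]

theorem swap_notMem_sameColorPairs (hc : IsStarEdgeColoring (completeGraph V) c) {a x y z z' : V}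
    (h : ((a, x), (y, z)) ∈ sameColorPairs c) : ((a, y), (x, z')) ∉ sameColorPairs c := by
  intro h'
  obtain ⟨hax, hyz, hcol, -⟩ := mem_sameColorPairs.mp h
  obtain ⟨-, hxz', hcol', -⟩ := mem_sameColorPairs.mp h'
  obtain ⟨hay, haz, hxy, hxz⟩ := hc.disjoint_of_mem_sameColorPairs h
  obtain ⟨-, haz', -, hyz'⟩ := hc.disjoint_of_mem_sameColorPairs h'
  refine hc.2 z y a x z' hyz.symm hay.symm hax hxz' haz.symm hxz.symm hxy.symm hyz' haz'
    ⟨?_, ?_⟩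
  · rw [Sym2.eq_swap, hcol]
  · rw [Sym2.eq_swap, hcol']

theorem two_mul_card_sameColorPairs_le (hc : IsStarEdgeColoring (completeGraph V) c) :
    2 * #(sameColorPairs c) ≤ #(uncoveredPairs c) := by
  set T := sameColorPairs c
  let φ : (V × V) × (V × V) → V × (V × V) := fun q => (q.1.1, (q.1.2, q.2.1))
  let σ : V × (V × V) → V × (V × V) := fun t => (t.1, t.2.swap)
  have hφ : Set.InjOn φ T := by
    rintro ⟨⟨a, x⟩, ⟨y, z⟩⟩ hq ⟨⟨_, _⟩, ⟨_, z'⟩⟩ hq' h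
    simp only [φ, Prod.mk.injEq] at h
    obtain ⟨rfl, rfl, rfl⟩ := h
    rw [mem_coe, mem_sameColorPairs] at hq hq'
    rw [hc.eq_of_color_eq hq.2.1 hq'.2.1 (hq.2.2.1.symm.trans hq'.2.2.1)]
  have hσ : Function.Injective σ := fun t t' h => by
    simpa [σ, Prod.ext_iff, and_comm] using h
  have hmaps : T.image φ ∪ (T.image φ).image σ ⊆ uncoveredPairs c := by
    have hφS : ∀ q ∈ T, φ q ∈ uncoveredPairs c := fun ⟨⟨_, _⟩, ⟨_, _⟩⟩ hq =>
      hc.mem_uncoveredPairs_of_mem_sameColorPairs hq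
    refine union_subset (image_subset_iff.mpr hφS) (image_subset_iff.mpr fun t ht => ?_)
    obtain ⟨q, hq, rfl⟩ := mem_image.mp ht
    exact mem_uncoveredPairs_comm.mp (hφS q hq)
  have hdisj : Disjoint (T.image φ) ((T.image φ).image σ) := by
    rw [Finset.disjoint_left]
    rintro _ ht ht'
    obtain ⟨⟨⟨a, x⟩, ⟨y, z⟩⟩, hq, rfl⟩ := mem_image.mp ht
    obtain ⟨t, ht, h⟩ := mem_image.mp ht'
    obtain ⟨⟨⟨_, _⟩, ⟨_, z'⟩⟩, hq', rfl⟩ := mem_image.mp ht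
    simp only [φ, σ, Prod.swap, Prod.mk.injEq] at h
    obtain ⟨rfl, rfl, rfl⟩ := h
    exact hc.swap_notMem_sameColorPairs hq hq'
  calc 2 * #T = #(T.image φ) + #((T.image φ).image σ) := by
        rw [card_image_of_injective _ hσ, card_image_of_injOn hφ]; ring
    _ = #(T.image φ ∪ (T.image φ).image σ) := (card_union_of_disjoint hdisj).symm
    _ ≤ #(uncoveredPairs c) := card_le_card hmaps

theorem three_mul_le_mul_card_add_four (hc : IsStarEdgeColoring (completeGraph V) c) :
    3 * (Fintype.card V * Fintype.card V - Fintype.card V) ≤ k * (Fintype.card V + 4) := by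
  set r := fun j => #(colorDarts c j)
  have hr : ∀ j, r j ≤ Fintype.card V := fun j =>
    (hc.card_coveredBy j).symm.trans_le (card_le_univ _)
  have hcount : 2 * ∑ j, r j * (r j - 2) ≤ ∑ j, r j * (Fintype.card V - r j) := by
    have h := hc.two_mul_card_sameColorPairs_le
    simpa only [card_sameColorPairs, card_uncoveredPairs, hc.card_coveredBy] using h
  have h := mul_sum_le_card_mul_of_mul_sum_sq_le r (three_mul_sum_sq_le r hr hcount)
  rwa [sum_card_colorDarts, Fintype.card_fin] at h

end IsStarEdgeColoring

end CompleteGraph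

theorem star_chromatic_index_complete_lower_general (n : ℕ) :
    (3 * n * (n - 1) : ℚ) / (n + 4) ≤ starChromaticIndex (completeGraph (Fin n)) := by
  obtain ⟨c, hc⟩ := exists_isStarEdgeColoring_starChromaticIndex (completeGraph (Fin n))
  have h := hc.three_mul_le_mul_card_add_four
  rw [Fintype.card_fin] at h
  have hℚ := (Nat.cast_le (α := ℚ)).mpr h
  push_cast [Nat.le_mul_self n] at hℚ
  rw [div_le_iff₀ (by positivity)]
  linarith

theorem star_chromatic_index_complete_lower (n : ℕ) (hn : 1 ≤ n) :
    (3 * n * (n - 1) : ℚ) / (n + 4) ≤ starChromaticIndex (completeGraph (Fin n)) :=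
  star_chromatic_index_complete_lower_general n
end

section
/- For every n ≥ 1, the star chromatic index of the complete bipartite graph K_{n,n} is at most the star chromatic index of K_n plus n. -/
open SimpleGraph

/-- The set of admissible numbers of colors for `K_n` is nonempty. -/
lemma knStarSet_nonempty (n : ℕ) :
    {k | ∃ c : Sym2 (Fin n) → Fin k, IsStarEdgeColoring (completeGraph (Fin n)) c}.Nonempty := by
  refine ⟨Fintype.card (Sym2 (Fin n)), Fintype.equivFin (Sym2 (Fin n)), ?_, ?_⟩
  · intro e f _ _ hef _ h
    exact hef ((Fintype.equivFin (Sym2 (Fin n))).injective h)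
  · intro v0 v1 v2 v3 v4 _ _ _ _ h02 h03 _ _ _ ⟨h1, _⟩
    have := (Fintype.equivFin (Sym2 (Fin n))).injective h1
    rw [Sym2.eq_iff] at this
    rcases this with ⟨h, _⟩ | ⟨h, _⟩
    · exact h02 h
    · exact h03 h

variable {n k : ℕ}

/-- The color of the edge between left vertex `i` and right vertex `j`. -/
def col (c : Sym2 (Fin n) → Fin k) (i j : Fin n) : Fin (k + n) :=
  if i = j then Fin.natAdd k i else Fin.castAdd n (c s(i, j))

lemma col_symm (c : Sym2 (Fin n) → Fin k) (i j : Fin n) : col c i j = col c j i := by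
  rcases eq_or_ne i j with rfl | h
  · rfl
  · rw [col, col, if_neg h, if_neg h.symm, Sym2.eq_swap]

/-- The coloring of `K_{n,n}` as a symmetric two-argument function. -/
def mix (c : Sym2 (Fin n) → Fin k) (hn : 0 < n) :
    Fin n ⊕ Fin n → Fin n ⊕ Fin n → Fin (k + n)
  | Sum.inl i, Sum.inr j => col c i j
  | Sum.inr j, Sum.inl i => col c i j
  | _, _ => Fin.natAdd k ⟨0, hn⟩

lemma mix_symm (c : Sym2 (Fin n) → Fin k) (hn : 0 < n) (x y : Fin n ⊕ Fin n) :
    mix c hn x y = mix c hn y x := by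
  cases x <;> cases y <;> rfl

lemma natAdd_ne_castAdd (i : Fin n) (x : Fin k) :
    (Fin.natAdd k i : Fin (k + n)) ≠ Fin.castAdd n x := by
  intro h
  have h2 := congrArg Fin.val h
  have h3 := x.isLt
  simp only [Fin.natAdd, Fin.castAdd, Fin.castLE] at h2
  omega

lemma natAdd_inj {i j : Fin n} (h : (Fin.natAdd k i : Fin (k + n)) = Fin.natAdd k j) :
    i = j := by
  have := congrArg Fin.val h
  simp only [Fin.natAdd] at this
  exact Fin.ext (by omega)

lemma castAdd_inj {x y : Fin k} (h : (Fin.castAdd n x : Fin (k + n)) = Fin.castAdd n y) :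
    x = y := Fin.castAdd_injective k n h

/-- Key lemma: the bicolored-path condition for the mixed coloring, in terms of
indices, one side of the bipartition alternating `i`'s and the other `j`'s. -/
lemma col_key (c : Sym2 (Fin n) → Fin k)
    (hc : IsStarEdgeColoring (completeGraph (Fin n)) c)
    (i0 j1 i2 j3 i4 : Fin n) (h02 : i0 ≠ i2) (h13 : j1 ≠ j3) (h24 : i2 ≠ i4) :
    ¬ (col c i0 j1 = col c i2 j3 ∧ col c j1 i2 = col c j3 i4) := by
  rintro ⟨h1, h2⟩
  rw [col, col] at h1
  rw [col, col] at h2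
  by_cases e01 : i0 = j1
  · rw [if_pos e01] at h1
    by_cases e23 : i2 = j3
    · rw [if_pos e23] at h1
      exact h02 (natAdd_inj h1)
    · rw [if_neg e23] at h1
      exact natAdd_ne_castAdd _ _ h1
  · rw [if_neg e01] at h1
    by_cases e23 : i2 = j3
    · rw [if_pos e23] at h1
      exact natAdd_ne_castAdd _ _ h1.symm
    · rw [if_neg e23] at h1
      by_cases e12 : j1 = i2
      · rw [if_pos e12] at h2
        by_cases e34 : j3 = i4
        · rw [if_pos e34] at h2
          exact h13 (natAdd_inj h2)
        · rw [if_neg e34] at h2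
          exact natAdd_ne_castAdd _ _ h2
      · rw [if_neg e12] at h2
        by_cases e34 : j3 = i4
        · rw [if_pos e34] at h2
          exact natAdd_ne_castAdd _ _ h2.symm
        · rw [if_neg e34] at h2
          -- now both equalities involve only old colors
          have hc1 : c s(i0, j1) = c s(i2, j3) := castAdd_inj h1
          have hc2 : c s(j1, i2) = c s(j3, i4) := castAdd_inj h2
          by_cases e03 : i0 = j3
          · subst e03
            refine hc.1 (e := s(i0, j1)) (f := s(i2, i0)) ?_ ?_ ?_ ⟨i0, by simp, by simp⟩ ?_
            · exact SimpleGraph.mem_edgeSet _ |>.mpr e01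
            · exact SimpleGraph.mem_edgeSet _ |>.mpr e23
            · intro h
              rw [Sym2.eq_iff] at h
              rcases h with ⟨h, _⟩ | ⟨_, h⟩
              · exact h02 h
              · exact e12 h
            · rw [hc1, Sym2.eq_swap]
          · by_cases e14 : j1 = i4
            · subst e14
              refine hc.1 (e := s(j1, i2)) (f := s(j3, j1)) ?_ ?_ ?_ ⟨j1, by simp, by simp⟩ ?_
              · exact SimpleGraph.mem_edgeSet _ |>.mpr e12
              · exact SimpleGraph.mem_edgeSet _ |>.mpr e34
              · intro h
                rw [Sym2.eq_iff] at h
                rcases h with ⟨h, _⟩ | ⟨_, h⟩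
                · exact h13 h
                · exact e23 h
              · rw [hc2, Sym2.eq_swap]
            · exact hc.2 i0 j1 i2 j3 i4 e01 e12 e23 e34
                h02 e03 h13 e14 h24 ⟨hc1, hc2⟩

theorem star_chromatic_index_Knn_le (n : ℕ) (hn : 1 ≤ n) :
    starChromaticIndex (completeBipartiteGraph (Fin n) (Fin n)) ≤
      starChromaticIndex (completeGraph (Fin n)) + n := by
  obtain ⟨c, hc⟩ := Nat.sInf_mem (knStarSet_nonempty n)
  set k := starChromaticIndex (completeGraph (Fin n)) with hk
  -- build the coloring of K_{n,n}
  have hsymm : ∀ x y, mix c hn x y = mix c hn y x := mix_symm c hn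
  let c' : Sym2 (Fin n ⊕ Fin n) → Fin (k + n) := Sym2.lift ⟨mix c hn, hsymm⟩
  have hc' : ∀ x y, c' s(x, y) = mix c hn x y := fun x y => Sym2.lift_mk _ x y
  apply Nat.sInf_le
  refine ⟨c', ?_, ?_⟩
  · -- properness
    intro e f he hf hef ⟨v, hve, hvf⟩
    obtain ⟨w, rfl⟩ := Sym2.mem_iff_exists.mp hve
    obtain ⟨w', rfl⟩ := Sym2.mem_iff_exists.mp hvf
    rw [SimpleGraph.mem_edgeSet] at he hf
    have hww' : w ≠ w' := fun h => hef (by rw [h])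
    rw [hc', hc']
    cases v with
    | inl i =>
      cases w with
      | inl a => simp at he
      | inr j =>
        cases w' with
        | inl a => simp at hf
        | inr j' =>
          have hjj' : j ≠ j' := fun h => hww' (by rw [h])
          show col c i j ≠ col c i j'
          rw [col, col]
          by_cases e1 : i = j
          · rw [if_pos e1]
            by_cases e2 : i = j'
            · exact absurd (e1.symm.trans e2) hjj'
            · rw [if_neg e2]; exact natAdd_ne_castAdd _ _
          · rw [if_neg e1]
            by_cases e2 : i = j'
            · rw [if_pos e2]; exact (natAdd_ne_castAdd _ _).symm
            · rw [if_neg e2]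
              intro h
              have := castAdd_inj h
              refine hc.1 (e := s(i, j)) (f := s(i, j')) ?_ ?_ ?_ ⟨i, by simp, by simp⟩ this
              · exact SimpleGraph.mem_edgeSet _ |>.mpr e1
              · exact SimpleGraph.mem_edgeSet _ |>.mpr e2
              · intro h
                rw [Sym2.eq_iff] at h
                rcases h with ⟨_, h⟩ | ⟨h, _⟩
                · exact hjj' h
                · exact e2 h
    | inr j =>
      cases w with
      | inr a => simp at he
      | inl i =>
        cases w' with
        | inr a => simp at hf
        | inl i' =>
          have hii' : i ≠ i' := fun h => hww' (by rw [h])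
          show col c i j ≠ col c i' j
          rw [col, col]
          by_cases e1 : i = j
          · rw [if_pos e1]
            by_cases e2 : i' = j
            · intro h
              exact hii' (e1.trans e2.symm)
            · rw [if_neg e2]; exact natAdd_ne_castAdd _ _
          · rw [if_neg e1]
            by_cases e2 : i' = j
            · rw [if_pos e2]; exact (natAdd_ne_castAdd _ _).symm
            · rw [if_neg e2]
              intro h
              have := castAdd_inj h
              refine hc.1 (e := s(i, j)) (f := s(i', j)) ?_ ?_ ?_ ⟨j, by simp, by simp⟩ this
              · exact SimpleGraph.mem_edgeSet _ |>.mpr e1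
              · exact SimpleGraph.mem_edgeSet _ |>.mpr e2
              · intro h
                rw [Sym2.eq_iff] at h
                rcases h with ⟨h, _⟩ | ⟨h, _⟩
                · exact hii' h
                · exact e1 h
  · -- star condition
    intro v0 v1 v2 v3 v4 a01 a12 a23 a34 h02 h03 h13 h14 h24
    rw [hc', hc', hc', hc']
    cases v0 with
    | inl i0 =>
      cases v1 with
      | inl a => simp at a01
      | inr j1 =>
        cases v2 with
        | inr a => simp at a12
        | inl i2 =>
          cases v3 with
          | inl a => simp at a23
          | inr j3 =>
            cases v4 with
            | inr a => simp at a34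
            | inl i4 =>
              have h02' : i0 ≠ i2 := fun h => h02 (by rw [h])
              have h13' : j1 ≠ j3 := fun h => h13 (by rw [h])
              have h24' : i2 ≠ i4 := fun h => h24 (by rw [h])
              show ¬ (col c i0 j1 = col c i2 j3 ∧ col c i2 j1 = col c i4 j3)
              rw [col_symm c i2 j1, col_symm c i4 j3]
              exact col_key c hc i0 j1 i2 j3 i4 h02' h13' h24'
    | inr j0 =>
      cases v1 with
      | inr a => simp at a01
      | inl i1 =>
        cases v2 with
        | inl a => simp at a12
        | inr j2 =>
          cases v3 with
          | inr a => simp at a23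
          | inl i3 =>
            cases v4 with
            | inl a => simp at a34
            | inr j4 =>
              have h02' : j0 ≠ j2 := fun h => h02 (by rw [h])
              have h13' : i1 ≠ i3 := fun h => h13 (by rw [h])
              have h24' : j2 ≠ j4 := fun h => h24 (by rw [h])
              show ¬ (col c i1 j0 = col c i3 j2 ∧ col c i1 j2 = col c i3 j4)
              rw [col_symm c i1 j0, col_symm c i3 j2]
              exact col_key c hc j0 i1 j2 i3 j4 h02' h13' h24'
end

section
/- Every subcubic graph G with maximum average degree less than 2 has star chromatic index at most 4. -/
open SimpleGraph

/-!
A graph with `mad G < 2` has fewer edges than vertices in every subgraph, so it has no cycle: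
`G` is a forest. Root every component, and give every vertex `v` a permutation `frame v` of the
four colours: a root gets the identity, and the child of index `i` of `v` gets `frame v * σ i`
for three fixed permutations `σ 0, σ 1, σ 2` (only a root has a child of index `2`). The edge
from a vertex `v` to its parent gets colour `frame v 0`.

A path with four edges in a rooted forest first climbs and then descends, so up to reversal its
highest vertex is at position `0`, `1` or `2`. Comparing colours along such a path, the frame of
the highest vertex cancels, and properness and the absence of bicoloured paths become finitely
many conditions on `σ 0, σ 1, σ 2`, which hold for a suitable explicit choice.
-/

open Finset

namespace SimpleGraph

variable {V : Type*} {G : SimpleGraph V}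

lemma Walk.IsTrail.ncard_edgeSet_toSubgraph {u v : V} {p : G.Walk u v} (hp : p.IsTrail) :
    p.toSubgraph.edgeSet.ncard = p.length := by
  classical
  rw [Walk.edgeSet_toSubgraph, Walk.edgeSet, ← List.coe_toFinset, Set.ncard_coe_finset,
    List.toFinset_card_of_nodup hp.edges_nodup, Walk.length_edges]

lemma Walk.ncard_verts_toSubgraph_le_length {u : V} {p : G.Walk u u} (hp : ¬p.Nil) :
    p.toSubgraph.verts.ncard ≤ p.length := by
  classical
  have hsub : p.toSubgraph.verts ⊆ p.support.tail.toFinset := by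
    intro w hw
    rw [Walk.mem_verts_toSubgraph, Walk.mem_support_iff] at hw
    rcases hw with rfl | hw
    · simpa using Walk.end_mem_tail_support hp
    · simpa using hw
  calc p.toSubgraph.verts.ncard ≤ (p.support.tail.toFinset : Set V).ncard :=
        Set.ncard_le_ncard hsub (Finset.finite_toSet _)
    _ ≤ p.support.tail.length := by rw [Set.ncard_coe_finset]; exact List.toFinset_card_le _
    _ = p.length := by simp [Walk.length_support]

lemma isAcyclic_of_forall_ncard_edgeSet_lt
    (h : ∀ H : G.Subgraph, H.verts.Nonempty → H.edgeSet.ncard < H.verts.ncard) :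
    G.IsAcyclic := by
  intro u c hc
  have hlt := h c.toSubgraph ⟨u, c.start_mem_verts_toSubgraph⟩
  rw [hc.isTrail.ncard_edgeSet_toSubgraph] at hlt
  exact (c.ncard_verts_toSubgraph_le_length hc.not_nil).not_gt hlt

variable (G)

noncomputable def root (v : V) : V := (G.connectedComponentMk v).out

lemma reachable_root (v : V) : G.Reachable v (G.root v) :=
  (ConnectedComponent.eq.mp (Quot.out_eq (G.connectedComponentMk v))).symm

noncomputable def rootPath (v : V) : G.Walk v (G.root v) :=
  (G.reachable_root v).exists_path_of_dist.choose

/-- The roots are exactly the fixed points of `parent`. -/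
noncomputable def parent (v : V) : V := (G.rootPath v).snd

noncomputable def depth (v : V) : ℕ := G.dist v (G.root v)

variable {G}

lemma isPath_rootPath (v : V) : (G.rootPath v).IsPath :=
  (G.reachable_root v).exists_path_of_dist.choose_spec.1

lemma length_rootPath (v : V) : (G.rootPath v).length = G.depth v :=
  (G.reachable_root v).exists_path_of_dist.choose_spec.2

lemma root_eq_of_adj {u v : V} (h : G.Adj u v) : G.root u = G.root v :=
  congrArg Quot.out (ConnectedComponent.connectedComponentMk_eq_of_adj h)

lemma not_nil_rootPath {v : V} (h : G.parent v ≠ v) : ¬(G.rootPath v).Nil :=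
  fun hnil => h <| by
    rw [parent, Walk.snd, Walk.getVert_of_length_le _ (by simp [Walk.length_eq_zero_iff.mpr hnil])]
    exact hnil.eq.symm

lemma adj_parent {v : V} (h : G.parent v ≠ v) : G.Adj v (G.parent v) :=
  (G.rootPath v).adj_snd (not_nil_rootPath h)

lemma depth_parent_lt {v : V} (h : G.parent v ≠ v) : G.depth (G.parent v) < G.depth v := by
  have hroot : G.root (G.parent v) = G.root v := (root_eq_of_adj (adj_parent h)).symm
  have hle : G.depth (G.parent v) ≤ (G.rootPath v).tail.length := by
    rw [depth, hroot]; exact dist_le _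
  have := (G.rootPath v).length_tail_add_one (not_nil_rootPath h)
  rw [length_rootPath] at this
  omega

lemma parent_parent_ne {v : V} (h : G.parent v ≠ v) : G.parent (G.parent v) ≠ v := by
  intro hpp
  have h' : G.parent (G.parent v) ≠ G.parent v := by rw [hpp]; exact h.symm
  have := depth_parent_lt h'
  rw [hpp] at this
  exact (depth_parent_lt h).not_gt this

lemma IsAcyclic.parent_eq_snd (hG : G.IsAcyclic) {v r : V} (hr : G.root v = r) {p : G.Walk v r}
    (hp : p.IsPath) : G.parent v = p.snd := by
  subst hr
  have := (hG.subsingleton_path v _).elim ⟨_, isPath_rootPath v⟩ ⟨p, hp⟩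
  rw [parent, Subtype.mk.inj this]

lemma IsAcyclic.parent_eq_or_parent_eq (hG : G.IsAcyclic) {u v : V} (h : G.Adj u v) :
    G.parent u = v ∨ G.parent v = u := by
  by_cases hv : v ∈ (G.rootPath u).support
  · exact .inl (hG.eq_snd_of_adj_start (isPath_rootPath u) h hv).symm
  · exact .inr <| (hG.parent_eq_snd (root_eq_of_adj h.symm) ((isPath_rootPath u).cons hv)).trans
      (Walk.snd_cons _ h.symm)

lemma eq_of_mk_parent_eq {v w : V} (hv : G.parent v ≠ v)
    (h : s(v, G.parent v) = s(w, G.parent w)) : v = w := by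
  rcases Sym2.eq_iff.1 h with ⟨hvw, -⟩ | ⟨hvw, hpv⟩
  · exact hvw
  · have hw : G.parent w ≠ w := by rw [← hvw, ← hpv]; exact hv.symm
    exact absurd (by rw [← hvw, hpv]) (parent_parent_ne hw)

variable [Fintype V]

variable (G) in
open Classical in
noncomputable def children (u : V) : Finset V := {v | G.parent v = u ∧ v ≠ u}

lemma mem_children {u v : V} : v ∈ G.children u ↔ G.parent v = u ∧ v ≠ u := by
  simp [children]

lemma parent_ne_of_mem_children {u v : V} (h : v ∈ G.children u) : G.parent v ≠ v := by
  rw [(mem_children.1 h).1]; exact (mem_children.1 h).2.symm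

lemma eq_of_mem_children_of_mem_children {u w v : V} (hu : v ∈ G.children u)
    (hw : v ∈ G.children w) : u = w :=
  (mem_children.1 hu).1.symm.trans (mem_children.1 hw).1

lemma IsAcyclic.mem_children_or_mem_children (hG : G.IsAcyclic) {u v : V} (h : G.Adj u v) :
    v ∈ G.children u ∨ u ∈ G.children v := by
  simp only [mem_children]
  rcases hG.parent_eq_or_parent_eq h with h' | h'
  · exact .inr ⟨h', h.ne⟩
  · exact .inl ⟨h', h.ne'⟩

lemma IsAcyclic.exists_mem_children_of_mem_edgeSet (hG : G.IsAcyclic) {e : Sym2 V}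
    (he : e ∈ G.edgeSet) : ∃ u v, v ∈ G.children u ∧ e = s(u, v) := by
  induction e using Sym2.ind with
  | h x y =>
    rcases hG.mem_children_or_mem_children he with h | h
    · exact ⟨x, y, h, rfl⟩
    · exact ⟨y, x, h, Sym2.eq_swap⟩

lemma card_children_le_degree [DecidableRel G.Adj] (u : V) : #(G.children u) ≤ G.degree u := by
  rw [← card_neighborFinset_eq_degree]
  refine Finset.card_le_card fun v hv => ?_
  rw [mem_neighborFinset]
  exact (mem_children.1 hv).1 ▸ (adj_parent (parent_ne_of_mem_children hv)).symm

lemma card_children_lt_degree [DecidableRel G.Adj] {u : V} (hu : G.parent u ≠ u) :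
    #(G.children u) < G.degree u := by
  rw [← card_neighborFinset_eq_degree]
  refine Finset.card_lt_card ⟨fun v hv => ?_, fun hsub => ?_⟩
  · rw [mem_neighborFinset]
    exact (mem_children.1 hv).1 ▸ (adj_parent (parent_ne_of_mem_children hv)).symm
  · have := mem_children.1 (hsub (mem_neighborFinset _ _ _ |>.2 (adj_parent hu)))
    exact parent_parent_ne hu this.1

variable (G) in
open Classical in
noncomputable def childIndex (u v : V) : ℕ :=
  if h : v ∈ G.children u then (G.children u).equivFin ⟨v, h⟩ else 0

lemma childIndex_lt_card {u v : V} (h : v ∈ G.children u) : G.childIndex u v < #(G.children u) := by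
  rw [childIndex, dif_pos h]; exact Fin.is_lt _

lemma childIndex_ne {u v w : V} (hv : v ∈ G.children u) (hw : w ∈ G.children u) (hvw : v ≠ w) :
    G.childIndex u v ≠ G.childIndex u w := by
  rw [childIndex, childIndex, dif_pos hv, dif_pos hw, Ne, Fin.val_inj, Equiv.apply_eq_iff_eq]
  exact fun h => hvw (congrArg Subtype.val h)

lemma IsAcyclic.climbs_then_descends (hG : G.IsAcyclic) {v₀ v₁ v₂ v₃ v₄ : V} (h₀₁ : G.Adj v₀ v₁)
    (h₁₂ : G.Adj v₁ v₂) (h₂₃ : G.Adj v₂ v₃) (h₃₄ : G.Adj v₃ v₄) (h₀₂ : v₀ ≠ v₂) (h₁₃ : v₁ ≠ v₃)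
    (h₂₄ : v₂ ≠ v₄) :
    (v₁ ∈ G.children v₀ ∧ v₂ ∈ G.children v₁ ∧ v₃ ∈ G.children v₂ ∧ v₄ ∈ G.children v₃) ∨
    (v₀ ∈ G.children v₁ ∧ v₂ ∈ G.children v₁ ∧ v₃ ∈ G.children v₂ ∧ v₄ ∈ G.children v₃) ∨
    (v₀ ∈ G.children v₁ ∧ v₁ ∈ G.children v₂ ∧ v₃ ∈ G.children v₂ ∧ v₄ ∈ G.children v₃) ∨
    (v₄ ∈ G.children v₃ ∧ v₂ ∈ G.children v₃ ∧ v₁ ∈ G.children v₂ ∧ v₀ ∈ G.children v₁) ∨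
    (v₃ ∈ G.children v₄ ∧ v₂ ∈ G.children v₃ ∧ v₁ ∈ G.children v₂ ∧ v₀ ∈ G.children v₁) := by
  have no_valley {u w : V} (v : V) (huw : u ≠ w) : ¬(v ∈ G.children u ∧ v ∈ G.children w) :=
    fun h => huw (eq_of_mem_children_of_mem_children h.1 h.2)
  rcases hG.mem_children_or_mem_children h₀₁ with _ | _ <;>
  rcases hG.mem_children_or_mem_children h₁₂ with _ | _ <;>
  rcases hG.mem_children_or_mem_children h₂₃ with _ | _ <;>
  rcases hG.mem_children_or_mem_children h₃₄ with _ | _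
  all_goals first
    | exact (no_valley v₁ h₀₂ ⟨‹_›, ‹_›⟩).elim
    | exact (no_valley v₂ h₁₃ ⟨‹_›, ‹_›⟩).elim
    | exact (no_valley v₃ h₂₄ ⟨‹_›, ‹_›⟩).elim
    | simp only [*, and_self, or_true, true_or]

section Frame

variable {α : Type*}

/-- Conditions under which `frameColoring σ a` is a star edge-colouring of every forest of maximum
degree `Δ` (see `IsAcyclic.isStarEdgeColoring_frameColoring`). Indices below `Δ - 1` are those of
children of non-roots; `chain`, `peak_one` and `peak_two` exclude bicoloured paths with four
edges whose highest vertex is the first, the second and the middle one. -/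
structure IsStarFrameRule (σ : ℕ → Equiv.Perm α) (a : α) (Δ : ℕ) : Prop where
  apply_ne_apply : ∀ i < Δ, ∀ j < Δ, i ≠ j → σ i a ≠ σ j a
  apply_ne : ∀ i < Δ - 1, σ i a ≠ a
  chain : ∀ i < Δ - 1, ∀ j < Δ - 1, ∀ k < Δ - 1, ¬(a = σ i (σ j a) ∧ a = σ j (σ k a))
  peak_one : ∀ i < Δ, ∀ j < Δ, ∀ k < Δ - 1, ∀ l < Δ - 1, i ≠ j →
    ¬(σ i a = σ j (σ k a) ∧ a = σ k (σ l a))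
  peak_two : ∀ i < Δ, ∀ j < Δ, ∀ k < Δ - 1, ∀ l < Δ - 1, i ≠ j →
    ¬(σ i (σ k a) = σ j a ∧ σ i a = σ j (σ l a))

variable (G) in
open Classical in
noncomputable def frame (σ : ℕ → Equiv.Perm α) (v : V) : Equiv.Perm α :=
  if h : G.parent v = v then 1
  else
    have := depth_parent_lt h
    frame σ (G.parent v) * σ (G.childIndex (G.parent v) v)
termination_by G.depth v

lemma frame_of_mem_children (σ : ℕ → Equiv.Perm α) {u v : V} (h : v ∈ G.children u) :
    G.frame σ v = G.frame σ u * σ (G.childIndex u v) := by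
  rw [frame, dif_neg (parent_ne_of_mem_children h)]
  dsimp only
  rw [(mem_children.1 h).1]

variable (G) in
open Classical in
/-- Every edge of a rooted forest is `s(v, parent v)` for exactly one `v`, which gives the
colour; the value off the edges is irrelevant. -/
noncomputable def frameColoring (σ : ℕ → Equiv.Perm α) (a : α) (e : Sym2 V) : α :=
  if h : ∃ v, G.parent v ≠ v ∧ e = s(v, G.parent v) then G.frame σ h.choose a else a

lemma frameColoring_of_mem_children (σ : ℕ → Equiv.Perm α) (a : α) {u v : V}
    (h : v ∈ G.children u) : G.frameColoring σ a s(u, v) = G.frame σ v a := by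
  have hedge : s(u, v) = s(v, G.parent v) := by rw [(mem_children.1 h).1, Sym2.eq_swap]
  have hex : ∃ w, G.parent w ≠ w ∧ s(u, v) = s(w, G.parent w) :=
    ⟨v, parent_ne_of_mem_children h, hedge⟩
  rw [frameColoring, dif_pos hex]
  obtain ⟨hw, hw'⟩ := hex.choose_spec
  rw [eq_of_mk_parent_eq hw (hw'.symm.trans hedge)]

section Star

variable [DecidableRel G.Adj] {Δ : ℕ}

lemma childIndex_lt (hdeg : ∀ v, G.degree v ≤ Δ) {u v : V} (h : v ∈ G.children u) :
    G.childIndex u v < Δ :=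
  (childIndex_lt_card h).trans_le ((card_children_le_degree u).trans (hdeg u))

lemma childIndex_lt_pred (hdeg : ∀ v, G.degree v ≤ Δ) {u v : V} (h : v ∈ G.children u)
    (hu : G.parent u ≠ u) : G.childIndex u v < Δ - 1 := by
  have := childIndex_lt_card h
  have := card_children_lt_degree hu
  have := hdeg u
  omega

variable {σ : ℕ → Equiv.Perm α} {a : α}

lemma frame_apply_ne_of_mem_children (hdeg : ∀ v, G.degree v ≤ Δ) (hσ : IsStarFrameRule σ a Δ)
    {u v : V} (hv : v ∈ G.children u) (hu : G.parent u ≠ u) : G.frame σ v a ≠ G.frame σ u a := by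
  rw [frame_of_mem_children σ hv, Equiv.Perm.mul_apply, Ne, EmbeddingLike.apply_eq_iff_eq]
  exact hσ.apply_ne _ (childIndex_lt_pred hdeg hv hu)

lemma frame_apply_ne_of_mem_children_of_ne (hdeg : ∀ v, G.degree v ≤ Δ)
    (hσ : IsStarFrameRule σ a Δ) {u v w : V} (hv : v ∈ G.children u) (hw : w ∈ G.children u)
    (hvw : v ≠ w) : G.frame σ v a ≠ G.frame σ w a := by
  rw [frame_of_mem_children σ hv, frame_of_mem_children σ hw, Equiv.Perm.mul_apply,
    Equiv.Perm.mul_apply, Ne, EmbeddingLike.apply_eq_iff_eq]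
  exact hσ.apply_ne_apply _ (childIndex_lt hdeg hv) _ (childIndex_lt hdeg hw)
    (childIndex_ne hv hw hvw)

lemma IsAcyclic.frameColoring_ne (hG : G.IsAcyclic) (hdeg : ∀ v, G.degree v ≤ Δ)
    (hσ : IsStarFrameRule σ a Δ) {e f : Sym2 V} (he : e ∈ G.edgeSet) (hf : f ∈ G.edgeSet)
    (hef : e ≠ f) (hshare : ∃ x, x ∈ e ∧ x ∈ f) :
    G.frameColoring σ a e ≠ G.frameColoring σ a f := by
  obtain ⟨u, v, hv, rfl⟩ := hG.exists_mem_children_of_mem_edgeSet he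
  obtain ⟨u', v', hv', rfl⟩ := hG.exists_mem_children_of_mem_edgeSet hf
  rw [frameColoring_of_mem_children σ a hv, frameColoring_of_mem_children σ a hv']
  obtain ⟨x, hx, hx'⟩ := hshare
  rw [Sym2.mem_iff] at hx hx'
  rcases hx with rfl | rfl <;> rcases hx' with rfl | rfl
  · exact frame_apply_ne_of_mem_children_of_ne hdeg hσ hv hv' (by rintro rfl; exact hef rfl)
  · exact frame_apply_ne_of_mem_children hdeg hσ hv (parent_ne_of_mem_children hv')
  · exact (frame_apply_ne_of_mem_children hdeg hσ hv' (parent_ne_of_mem_children hv)).symm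
  · exact absurd (by rw [eq_of_mem_children_of_mem_children hv hv']) hef

lemma not_bicolored_of_chain (hdeg : ∀ v, G.degree v ≤ Δ) (hσ : IsStarFrameRule σ a Δ)
    {v₀ v₁ v₂ v₃ v₄ : V} (h₁ : v₁ ∈ G.children v₀) (h₂ : v₂ ∈ G.children v₁)
    (h₃ : v₃ ∈ G.children v₂) (h₄ : v₄ ∈ G.children v₃) :
    ¬(G.frameColoring σ a s(v₀, v₁) = G.frameColoring σ a s(v₂, v₃) ∧
      G.frameColoring σ a s(v₁, v₂) = G.frameColoring σ a s(v₃, v₄)) := by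
  rw [frameColoring_of_mem_children σ a h₁, frameColoring_of_mem_children σ a h₂,
    frameColoring_of_mem_children σ a h₃, frameColoring_of_mem_children σ a h₄,
    frame_of_mem_children σ h₄, frame_of_mem_children σ h₃, frame_of_mem_children σ h₂]
  simp only [Equiv.Perm.mul_apply, EmbeddingLike.apply_eq_iff_eq]
  exact hσ.chain _ (childIndex_lt_pred hdeg h₂ (parent_ne_of_mem_children h₁))
    _ (childIndex_lt_pred hdeg h₃ (parent_ne_of_mem_children h₂))
    _ (childIndex_lt_pred hdeg h₄ (parent_ne_of_mem_children h₃))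

lemma not_bicolored_of_peak_one (hdeg : ∀ v, G.degree v ≤ Δ) (hσ : IsStarFrameRule σ a Δ)
    {v₀ v₁ v₂ v₃ v₄ : V} (h₀ : v₀ ∈ G.children v₁) (h₂ : v₂ ∈ G.children v₁)
    (h₃ : v₃ ∈ G.children v₂) (h₄ : v₄ ∈ G.children v₃) (h₀₂ : v₀ ≠ v₂) :
    ¬(G.frameColoring σ a s(v₀, v₁) = G.frameColoring σ a s(v₂, v₃) ∧
      G.frameColoring σ a s(v₁, v₂) = G.frameColoring σ a s(v₃, v₄)) := by
  rw [Sym2.eq_swap, frameColoring_of_mem_children σ a h₀, frameColoring_of_mem_children σ a h₂,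
    frameColoring_of_mem_children σ a h₃, frameColoring_of_mem_children σ a h₄,
    frame_of_mem_children σ h₄, frame_of_mem_children σ h₃, frame_of_mem_children σ h₂,
    frame_of_mem_children σ h₀]
  simp only [Equiv.Perm.mul_apply, EmbeddingLike.apply_eq_iff_eq]
  exact hσ.peak_one _ (childIndex_lt hdeg h₀) _ (childIndex_lt hdeg h₂)
    _ (childIndex_lt_pred hdeg h₃ (parent_ne_of_mem_children h₂))
    _ (childIndex_lt_pred hdeg h₄ (parent_ne_of_mem_children h₃)) (childIndex_ne h₀ h₂ h₀₂)

lemma not_bicolored_of_peak_two (hdeg : ∀ v, G.degree v ≤ Δ) (hσ : IsStarFrameRule σ a Δ)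
    {v₀ v₁ v₂ v₃ v₄ : V} (h₀ : v₀ ∈ G.children v₁) (h₁ : v₁ ∈ G.children v₂)
    (h₃ : v₃ ∈ G.children v₂) (h₄ : v₄ ∈ G.children v₃) (h₁₃ : v₁ ≠ v₃) :
    ¬(G.frameColoring σ a s(v₀, v₁) = G.frameColoring σ a s(v₂, v₃) ∧
      G.frameColoring σ a s(v₁, v₂) = G.frameColoring σ a s(v₃, v₄)) := by
  rw [Sym2.eq_swap, frameColoring_of_mem_children σ a h₀, Sym2.eq_swap (a := v₁),
    frameColoring_of_mem_children σ a h₁, frameColoring_of_mem_children σ a h₃,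
    frameColoring_of_mem_children σ a h₄, frame_of_mem_children σ h₄, frame_of_mem_children σ h₃,
    frame_of_mem_children σ h₀, frame_of_mem_children σ h₁]
  simp only [Equiv.Perm.mul_apply, EmbeddingLike.apply_eq_iff_eq]
  exact hσ.peak_two _ (childIndex_lt hdeg h₁) _ (childIndex_lt hdeg h₃)
    _ (childIndex_lt_pred hdeg h₀ (parent_ne_of_mem_children h₁))
    _ (childIndex_lt_pred hdeg h₄ (parent_ne_of_mem_children h₃)) (childIndex_ne h₁ h₃ h₁₃)

variable {k : ℕ} {σ : ℕ → Equiv.Perm (Fin k)} {a : Fin k}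

theorem IsAcyclic.isStarEdgeColoring_frameColoring (hG : G.IsAcyclic)
    (hdeg : ∀ v, G.degree v ≤ Δ) (hσ : IsStarFrameRule σ a Δ) :
    IsStarEdgeColoring G (G.frameColoring σ a) := by
  refine ⟨fun e f he hf hef hshare => hG.frameColoring_ne hdeg hσ he hf hef hshare, ?_⟩
  intro v₀ v₁ v₂ v₃ v₄ h₀₁ h₁₂ h₂₃ h₃₄ h₀₂ _ h₁₃ _ h₂₄ hbi
  have hrev : G.frameColoring σ a s(v₄, v₃) = G.frameColoring σ a s(v₂, v₁) ∧
      G.frameColoring σ a s(v₃, v₂) = G.frameColoring σ a s(v₁, v₀) := by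
    rw [Sym2.eq_swap (a := v₄), Sym2.eq_swap (a := v₂) (b := v₁), Sym2.eq_swap (a := v₃) (b := v₂),
      Sym2.eq_swap (a := v₁) (b := v₀)]
    exact ⟨hbi.2.symm, hbi.1.symm⟩
  rcases hG.climbs_then_descends h₀₁ h₁₂ h₂₃ h₃₄ h₀₂ h₁₃ h₂₄ with
    ⟨h₁, h₂, h₃, h₄⟩ | ⟨h₀, h₂, h₃, h₄⟩ | ⟨h₀, h₁, h₃, h₄⟩ | ⟨h₄, h₂, h₁, h₀⟩ | ⟨h₃, h₂, h₁, h₀⟩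
  · exact not_bicolored_of_chain hdeg hσ h₁ h₂ h₃ h₄ hbi
  · exact not_bicolored_of_peak_one hdeg hσ h₀ h₂ h₃ h₄ h₀₂ hbi
  · exact not_bicolored_of_peak_two hdeg hσ h₀ h₁ h₃ h₄ h₁₃ hbi
  · exact not_bicolored_of_peak_one hdeg hσ h₄ h₂ h₁ h₀ h₂₄.symm hrev
  · exact not_bicolored_of_chain hdeg hσ h₃ h₂ h₁ h₀ hrev

end Star

end Frame

end SimpleGraph

/-- Writing a frame `π` as `(π 0, π 1, π 2, π 3) = (a, b, c, d)`, the children get the frames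
`(b, c, d, a)`, `(c, a, d, b)` and, below a root, `(a, b, d, c)`. -/
def subcubicFrameRule : ℕ → Equiv.Perm (Fin 4)
  | 0 => finRotate 4
  | 1 => ⟨![2, 0, 3, 1], ![1, 3, 0, 2], by decide, by decide⟩
  | _ => Equiv.swap 2 3

set_option synthInstance.maxSize 1024 in
lemma isStarFrameRule_subcubicFrameRule : IsStarFrameRule subcubicFrameRule 0 3 := by
  constructor <;> decide

theorem star_chromatic_index_subcubic_mad_lt_two {V : Type*} [Fintype V]
    (G : SimpleGraph V) [DecidableRel G.Adj]
    (hdeg : ∀ v, G.degree v ≤ 3)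
    (hmad : ∀ H : G.Subgraph, H.verts.Nonempty →
      (2 * H.edgeSet.ncard : ℚ) / H.verts.ncard < 2) :
    starChromaticIndex G ≤ 4 := by
  have hG : G.IsAcyclic := isAcyclic_of_forall_ncard_edgeSet_lt fun H hH => by
    have hpos : (0 : ℚ) < H.verts.ncard := by exact_mod_cast (Set.ncard_pos H.verts.toFinite).2 hH
    have := hmad H hH
    rw [div_lt_iff₀ hpos] at this
    exact_mod_cast (by linarith : (H.edgeSet.ncard : ℚ) < H.verts.ncard)
  exact Nat.sInf_le ⟨_, hG.isStarEdgeColoring_frameColoring hdeg isStarFrameRule_subcubicFrameRule⟩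
end

section
/- For any two graphs G and H, χ'_st(G □ H) ≤ min{χ'_st(G)·χ(H) + χ'_st(H), χ'_st(H)·χ(G) + χ'_st(G)}, where □ denotes the Cartesian product. -/
open SimpleGraph

noncomputable def chromNumber {V : Type*} (G : SimpleGraph V) : ℕ :=
  sInf {n | G.Colorable n}

-- auxiliary lemmas

lemma helper1 {kG n cv pv : ℕ} (hc : cv < kG) (hp : pv < n) : cv + kG * pv < kG * n := by
  have h1 : cv + kG * pv < kG * (pv + 1) := by rw [Nat.mul_succ]; omega
  exact h1.trans_le (Nat.mul_le_mul_left _ hp)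

lemma helper3 {kG c c' p p' : ℕ} (hc : c < kG) (hc' : c' < kG)
    (h : c + kG * p = c' + kG * p') : c = c' ∧ p = p' := by
  have h1 : (c + kG * p) % kG = c := by rw [Nat.add_mul_mod_self_left, Nat.mod_eq_of_lt hc]
  have h2 : (c' + kG * p') % kG = c' := by rw [Nat.add_mul_mod_self_left, Nat.mod_eq_of_lt hc']
  have hcc : c = c' := by rw [← h1, ← h2, h]
  subst hcc
  have := Nat.add_left_cancel h
  exact ⟨rfl, Nat.eq_of_mul_eq_mul_left (by omega) this⟩

noncomputable def boxColor {α β : Type*} {kG kH n : ℕ}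
    (cG : Sym2 α → Fin kG) (cH : Sym2 β → Fin kH) (φ : β → Fin n) :
    Sym2 (α × β) → Fin (kG * n + kH) :=
  Sym2.lift ⟨fun p q =>
    letI := Classical.decEq β
    if h : p.2 = q.2 then
      ⟨(cG s(p.1, q.1)).val + kG * (φ p.2).val,
        (helper1 (cG _).isLt (φ _).isLt).trans_le (Nat.le_add_right _ _)⟩
    else
      ⟨kG * n + (cH s(p.2, q.2)).val, by have := (cH s(p.2, q.2)).isLt; omega⟩,
    by
      intro p q
      dsimp only
      letI := Classical.decEq β
      by_cases h : p.2 = q.2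
      · rw [dif_pos h, dif_pos h.symm]
        apply Fin.ext
        dsimp only
        rw [h, Sym2.eq_swap]
      · rw [dif_neg h, dif_neg (Ne.symm h)]
        apply Fin.ext
        dsimp only
        rw [Sym2.eq_swap]⟩

lemma boxColor_val_G {α β : Type*} {kG kH n : ℕ}
    (cG : Sym2 α → Fin kG) (cH : Sym2 β → Fin kH) (φ : β → Fin n) (a b : α) (x : β) :
    (boxColor cG cH φ s((a, x), (b, x))).val = (cG s(a, b)).val + kG * (φ x).val := by
  rw [boxColor, Sym2.lift_mk]
  dsimp only
  rw [dif_pos rfl]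

lemma boxColor_val_H {α β : Type*} {kG kH n : ℕ}
    (cG : Sym2 α → Fin kG) (cH : Sym2 β → Fin kH) (φ : β → Fin n) (a b : α) {x y : β}
    (h : x ≠ y) :
    (boxColor cG cH φ s((a, x), (b, y))).val = kG * n + (cH s(x, y)).val := by
  rw [boxColor, Sym2.lift_mk]
  dsimp only
  rw [dif_neg h]

lemma helper2 {kG n kH : ℕ} {c : Fin kG} {p : Fin n} {w : Fin kH} :
    c.val + kG * p.val ≠ kG * n + w.val :=
  Nat.ne_of_lt (lt_of_lt_of_le (helper1 c.isLt p.isLt) (Nat.le_add_right _ _))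

lemma isStar_box {α β : Type*} {kG kH n : ℕ} {G : SimpleGraph α} {H : SimpleGraph β}
    {cG : Sym2 α → Fin kG} (hG : IsStarEdgeColoring G cG)
    {cH : Sym2 β → Fin kH} (hH : IsStarEdgeColoring H cH)
    (φ : H.Coloring (Fin n)) :
    IsStarEdgeColoring (G.boxProd H) (boxColor cG cH φ) := by
  constructor
  · intro e f
    induction e using Sym2.ind with | _ p q => ?_
    induction f using Sym2.ind with | _ r s => ?_
    obtain ⟨a1, x1⟩ := p; obtain ⟨a2, x2⟩ := q
    obtain ⟨b1, y1⟩ := r; obtain ⟨b2, y2⟩ := s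
    intro he hf hne hsh hcol
    rw [SimpleGraph.mem_edgeSet] at he hf
    obtain ⟨v, hv1, hv2⟩ := hsh
    have hv := congrArg Fin.val hcol
    rcases boxProd_adj.mp he with ⟨heG, hx⟩ | ⟨heH, ha⟩
    · obtain rfl : x1 = x2 := hx
      rcases boxProd_adj.mp hf with ⟨hfG, hy⟩ | ⟨hfH, hb⟩
      · -- G-G
        obtain rfl : y1 = y2 := hy
        have e1 : v.2 = x1 := by rcases Sym2.mem_iff.mp hv1 with rfl | rfl <;> rfl
        have e2 : v.2 = y1 := by rcases Sym2.mem_iff.mp hv2 with rfl | rfl <;> rfl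
        obtain rfl : x1 = y1 := e1 ▸ e2
        rw [boxColor_val_G, boxColor_val_G] at hv
        have hcg : cG s(a1, a2) = cG s(b1, b2) := Fin.ext (Nat.add_right_cancel hv)
        refine hG.1 (G.mem_edgeSet.mpr heG) (G.mem_edgeSet.mpr hfG)
          ?_ ⟨v.1, ?_, ?_⟩ hcg
        · intro hq
          apply hne
          have := congrArg (Sym2.map (fun a => (a, x1))) hq
          rwa [Sym2.map_pair_eq, Sym2.map_pair_eq] at this
        · rcases Sym2.mem_iff.mp hv1 with rfl | rfl
          · exact Sym2.mem_iff.mpr (Or.inl rfl)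
          · exact Sym2.mem_iff.mpr (Or.inr rfl)
        · rcases Sym2.mem_iff.mp hv2 with rfl | rfl
          · exact Sym2.mem_iff.mpr (Or.inl rfl)
          · exact Sym2.mem_iff.mpr (Or.inr rfl)
      · -- G-H
        obtain rfl : b1 = b2 := hb
        rw [boxColor_val_G, boxColor_val_H _ _ _ _ _ hfH.ne] at hv
        exact helper2 hv
    · obtain rfl : a1 = a2 := ha
      rcases boxProd_adj.mp hf with ⟨hfG, hy⟩ | ⟨hfH, hb⟩
      · -- H-G
        obtain rfl : y1 = y2 := hy
        rw [boxColor_val_H _ _ _ _ _ heH.ne, boxColor_val_G] at hv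
        exact helper2 hv.symm
      · -- H-H
        obtain rfl : b1 = b2 := hb
        rw [boxColor_val_H _ _ _ _ _ heH.ne, boxColor_val_H _ _ _ _ _ hfH.ne] at hv
        have hch : cH s(x1, x2) = cH s(y1, y2) := Fin.ext (Nat.add_left_cancel hv)
        have e1 : v.1 = a1 := by rcases Sym2.mem_iff.mp hv1 with rfl | rfl <;> rfl
        have e2 : v.1 = b1 := by rcases Sym2.mem_iff.mp hv2 with rfl | rfl <;> rfl
        obtain rfl : a1 = b1 := e1 ▸ e2
        refine hH.1 (H.mem_edgeSet.mpr heH) (H.mem_edgeSet.mpr hfH)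
          ?_ ⟨v.2, ?_, ?_⟩ hch
        · intro hq
          apply hne
          have := congrArg (Sym2.map (fun x => (a1, x))) hq
          rwa [Sym2.map_pair_eq, Sym2.map_pair_eq] at this
        · rcases Sym2.mem_iff.mp hv1 with rfl | rfl
          · exact Sym2.mem_iff.mpr (Or.inl rfl)
          · exact Sym2.mem_iff.mpr (Or.inr rfl)
        · rcases Sym2.mem_iff.mp hv2 with rfl | rfl
          · exact Sym2.mem_iff.mpr (Or.inl rfl)
          · exact Sym2.mem_iff.mpr (Or.inr rfl)
  · rintro ⟨a0, x0⟩ ⟨a1, x1⟩ ⟨a2, x2⟩ ⟨a3, x3⟩ ⟨a4, x4⟩ h01 h12 h23 h34 d02 d03 d13 d14 d24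
      ⟨hc13, hc24⟩
    have H13 := congrArg Fin.val hc13
    have H24 := congrArg Fin.val hc24
    simp only [boxProd_adj] at h01 h12 h23 h34
    rcases h01 with ⟨q01, rfl⟩ | ⟨q01, rfl⟩ <;>
      rcases h12 with ⟨q12, rfl⟩ | ⟨q12, rfl⟩ <;>
        rcases h23 with ⟨q23, rfl⟩ | ⟨q23, rfl⟩ <;>
          rcases h34 with ⟨q34, rfl⟩ | ⟨q34, rfl⟩ <;>
    · first
        | rw [boxColor_val_G, boxColor_val_G] at H13
        | rw [boxColor_val_G, boxColor_val_H _ _ _ _ _ q23.ne] at H13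
        | rw [boxColor_val_H _ _ _ _ _ q01.ne, boxColor_val_G] at H13
        | rw [boxColor_val_H _ _ _ _ _ q01.ne, boxColor_val_H _ _ _ _ _ q23.ne] at H13
      first
        | rw [boxColor_val_G, boxColor_val_G] at H24
        | rw [boxColor_val_G, boxColor_val_H _ _ _ _ _ q34.ne] at H24
        | rw [boxColor_val_H _ _ _ _ _ q12.ne, boxColor_val_G] at H24
        | rw [boxColor_val_H _ _ _ _ _ q12.ne, boxColor_val_H _ _ _ _ _ q34.ne] at H24
      first
        | exact helper2 H13
        | exact helper2 H13.symm
        | exact helper2 H24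
        | exact helper2 H24.symm
        | exact φ.valid q12 (Fin.ext (helper3 (Fin.isLt _) (Fin.isLt _) H13).2)
        | exact φ.valid q23 (Fin.ext (helper3 (Fin.isLt _) (Fin.isLt _) H24).2)
        | (exact hG.2 _ _ _ _ _ q01 q12 q23 q34
            (fun h => d02 (by rw [h])) (fun h => d03 (by rw [h])) (fun h => d13 (by rw [h]))
            (fun h => d14 (by rw [h])) (fun h => d24 (by rw [h]))
            ⟨Fin.ext (Nat.add_right_cancel H13), Fin.ext (Nat.add_right_cancel H24)⟩)
        | (exact hH.2 _ _ _ _ _ q01 q12 q23 q34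
            (fun h => d02 (by rw [h])) (fun h => d03 (by rw [h])) (fun h => d13 (by rw [h]))
            (fun h => d14 (by rw [h])) (fun h => d24 (by rw [h]))
            ⟨Fin.ext (Nat.add_left_cancel H13), Fin.ext (Nat.add_left_cancel H24)⟩)

lemma pullback_star {V W : Type*} {G : SimpleGraph V} {G' : SimpleGraph W} {k : ℕ}
    (ι : V → W) (hinj : Function.Injective ι)
    (hadj : ∀ ⦃a b : V⦄, G.Adj a b → G'.Adj (ι a) (ι b))
    {c : Sym2 W → Fin k} (hc : IsStarEdgeColoring G' c) :
    IsStarEdgeColoring G (fun e => c (e.map ι)) := by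
  constructor
  · intro e f he hf hne hsh
    refine hc.1 ?_ ?_ (fun h => hne (Sym2.map.injective hinj h)) ?_
    · induction e using Sym2.ind with | _ a b => ?_
      rw [SimpleGraph.mem_edgeSet] at he
      rw [Sym2.map_pair_eq, SimpleGraph.mem_edgeSet]
      exact hadj he
    · induction f using Sym2.ind with | _ a b => ?_
      rw [SimpleGraph.mem_edgeSet] at hf
      rw [Sym2.map_pair_eq, SimpleGraph.mem_edgeSet]
      exact hadj hf
    · obtain ⟨v, hv1, hv2⟩ := hsh
      exact ⟨ι v, Sym2.mem_map.mpr ⟨v, hv1, rfl⟩, Sym2.mem_map.mpr ⟨v, hv2, rfl⟩⟩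
  · intro v0 v1 v2 v3 v4 h01 h12 h23 h34 d02 d03 d13 d14 d24
    have := hc.2 (ι v0) (ι v1) (ι v2) (ι v3) (ι v4) (hadj h01) (hadj h12) (hadj h23) (hadj h34)
      (hinj.ne d02) (hinj.ne d03) (hinj.ne d13) (hinj.ne d14) (hinj.ne d24)
    simpa only [Sym2.map_pair_eq] using this

lemma colorable_of_properEdge {V : Type*} {G : SimpleGraph V} {k : ℕ} (c : Sym2 V → Fin k)
    (hc : ∀ ⦃e f : Sym2 V⦄, e ∈ G.edgeSet → f ∈ G.edgeSet → e ≠ f →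
      (∃ v, v ∈ e ∧ v ∈ f) → c e ≠ c f) :
    G.Colorable (2 ^ k) := by
  classical
  let head : Sym2 V → V := fun e => (Quot.out e).1
  have hhead : ∀ e : Sym2 V, head e ∈ e := fun e => Sym2.out_fst_mem e
  let C : V → (Fin k → Bool) := fun v i =>
    decide (∃ e ∈ G.edgeSet, v ∈ e ∧ c e = i ∧ head e = v)
  have hCval : ∀ ⦃u v : V⦄, G.Adj u v → C u ≠ C v := by
    intro u v huv hCeq
    have hne : u ≠ v := huv.ne
    have hmem : s(u, v) ∈ G.edgeSet := G.mem_edgeSet.mpr huv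
    set i := c s(u, v) with hi
    have hhm := hhead s(u, v)
    have key : ∀ w, w ∈ s(u, v) → head s(u, v) = w → C w i = true := by
      intro w hw hhw
      simp only [C, decide_eq_true_eq]
      exact ⟨s(u, v), hmem, hw, rfl, hhw⟩
    have notother : ∀ w, w ∈ s(u, v) → head s(u, v) ≠ w → C w i = false := by
      intro w hw hhw
      simp only [C, decide_eq_false_iff_not]
      rintro ⟨e, hee, hwe, hce, hhe⟩
      rcases eq_or_ne e s(u, v) with rfl | hne2
      · exact hhw hhe
      · exact hc hee hmem hne2 ⟨w, hwe, hw⟩ hce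
    rcases Sym2.mem_iff.mp hhm with hh | hh
    · have h1 := key u (Sym2.mem_iff.mpr (Or.inl rfl)) hh
      have h2 := notother v (Sym2.mem_iff.mpr (Or.inr rfl)) (by rw [hh]; exact hne)
      rw [hCeq] at h1; rw [h1] at h2; exact Bool.noConfusion h2
    · have h1 := key v (Sym2.mem_iff.mpr (Or.inr rfl)) hh
      have h2 := notother u (Sym2.mem_iff.mpr (Or.inl rfl)) (by rw [hh]; exact hne.symm)
      rw [← hCeq] at h1; rw [h1] at h2; exact Bool.noConfusion h2
  have col : G.Coloring (Fin k → Bool) := SimpleGraph.Coloring.mk C (fun h => hCval h)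
  have := col.colorable
  simpa using this

lemma sCI_iso {V W : Type*} {G : SimpleGraph V} {G' : SimpleGraph W} (e : G ≃g G') :
    starChromaticIndex G = starChromaticIndex G' := by
  unfold starChromaticIndex
  congr 1
  ext k
  constructor
  · rintro ⟨c, hc⟩
    exact ⟨fun f => c (f.map e.symm),
      pullback_star e.symm e.symm.toEquiv.injective
        (fun a b h => e.symm.map_rel_iff.mpr h) hc⟩
  · rintro ⟨c, hc⟩
    exact ⟨fun f => c (f.map e),
      pullback_star e e.toEquiv.injective (fun a b h => e.map_rel_iff.mpr h) hc⟩

lemma aux_le {α β : Type*} (G : SimpleGraph α) (H : SimpleGraph β) :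
    starChromaticIndex (G.boxProd H) ≤
      starChromaticIndex G * chromNumber H + starChromaticIndex H := by
  classical
  by_cases hab : Nonempty (α × β)
  · obtain ⟨a0, b0⟩ := hab.some
    by_cases hbox : {k | ∃ c : Sym2 (α × β) → Fin k,
        IsStarEdgeColoring (G.boxProd H) c}.Nonempty
    · obtain ⟨k, c, hc⟩ := hbox
      -- restriction to a G-fiber
      have hG1 : {m | ∃ c : Sym2 α → Fin m, IsStarEdgeColoring G c}.Nonempty :=
        ⟨k, fun f => c (f.map (fun a => (a, b0))),
          pullback_star _ (fun a a' h => by injection h)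
            (fun a a' h => boxProd_adj_left.mpr h) hc⟩
      have hHstar : IsStarEdgeColoring H (fun f => c (f.map (fun b => (a0, b)))) :=
        pullback_star _ (fun b b' h => by injection h)
          (fun b b' h => boxProd_adj_right.mpr h) hc
      have hH1 : {m | ∃ c : Sym2 β → Fin m, IsStarEdgeColoring H c}.Nonempty :=
        ⟨k, _, hHstar⟩
      have hcol : {n | H.Colorable n}.Nonempty :=
        ⟨2 ^ k, colorable_of_properEdge _ hHstar.1⟩
      obtain ⟨cG, hcG⟩ := Nat.sInf_mem hG1
      obtain ⟨cH, hcH⟩ := Nat.sInf_mem hH1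
      obtain ⟨φ⟩ := Nat.sInf_mem hcol
      exact Nat.sInf_le ⟨boxColor cG cH φ, isStar_box hcG hcH φ⟩
    · rw [starChromaticIndex, Set.not_nonempty_iff_eq_empty.mp hbox, Nat.sInf_empty]
      exact Nat.zero_le _
  · have hE : IsEmpty (α × β) := not_nonempty_iff.mp hab
    have h0 : (0 : ℕ) ∈ {k | ∃ c : Sym2 (α × β) → Fin k,
        IsStarEdgeColoring (G.boxProd H) c} := by
      refine ⟨fun f => isEmptyElim f, fun e f he => isEmptyElim e, fun v0 => isEmptyElim v0⟩
    exact le_trans (Nat.sInf_le h0) (Nat.zero_le _)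


theorem star_chromatic_index_boxProd {α β : Type*} (G : SimpleGraph α) (H : SimpleGraph β) :
    starChromaticIndex (G.boxProd H) ≤
      min (starChromaticIndex G * chromNumber H + starChromaticIndex H)
        (starChromaticIndex H * chromNumber G + starChromaticIndex G) := by
  rw [le_min_iff]
  refine ⟨aux_le G H, ?_⟩
  rw [show starChromaticIndex (G.boxProd H) = starChromaticIndex (H.boxProd G) from
    sCI_iso (boxProdComm G H)]
  exact aux_le H G
end

section
/- The generalized Petersen graph P(n,k) has star chromatic index equal to 4 if and only if n ≡ 0 (mod 4) and k is odd. -/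
open SimpleGraph

/-- The generalized Petersen graph $P(n,k)$: outer vertices $(false, i)$ forming an
$n$-cycle, inner vertices $(true, i)$, spokes, and inner edges $v_i v_{i+k}$. -/
def genPetersen (n k : ℕ) : SimpleGraph (Bool × ZMod n) :=
  SimpleGraph.fromRel (fun a b =>
    (a.1 = false ∧ b.1 = false ∧ b.2 = a.2 + 1) ∨
    (a.1 = false ∧ b.1 = true ∧ b.2 = a.2) ∨
    (a.1 = true ∧ b.1 = true ∧ b.2 = a.2 + (k : ZMod n)))

section Adj

variable {n k : ℕ}

lemma genPetersen_adj (a b : Bool × ZMod n) :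
    (genPetersen n k).Adj a b ↔ a ≠ b ∧
      (((a.1 = false ∧ b.1 = false ∧ b.2 = a.2 + 1) ∨
       (a.1 = false ∧ b.1 = true ∧ b.2 = a.2) ∨
       (a.1 = true ∧ b.1 = true ∧ b.2 = a.2 + (k : ZMod n))) ∨
       ((b.1 = false ∧ a.1 = false ∧ a.2 = b.2 + 1) ∨
       (b.1 = false ∧ a.1 = true ∧ a.2 = b.2) ∨
       (b.1 = true ∧ a.1 = true ∧ a.2 = b.2 + (k : ZMod n)))) :=
  SimpleGraph.fromRel_adj _ a b

instance : DecidableRel (genPetersen n k).Adj := fun a b =>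
  decidable_of_iff' _ (genPetersen_adj a b)

variable (hn : 3 ≤ n) (hk : 1 ≤ k) (hnk : 2 * k + 1 ≤ n)

include hn in
lemma two_ne_zero'' : (2 : ZMod n) ≠ 0 := by
  haveI : NeZero n := ⟨by omega⟩
  intro h2
  have h3 : ((2:ℕ) : ZMod n) = 0 := by push_cast; exact h2
  rw [ZMod.natCast_eq_zero_iff] at h3
  have := Nat.le_of_dvd (by norm_num) h3
  omega

include hn in
lemma one_ne_zero'' : (1 : ZMod n) ≠ 0 := by
  haveI : NeZero n := ⟨by omega⟩
  intro h2
  have h3 : ((1:ℕ) : ZMod n) = 0 := by push_cast; exact h2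
  rw [ZMod.natCast_eq_zero_iff] at h3
  have := Nat.le_of_dvd (by norm_num) h3
  omega

include hk hnk in
omit hn in
lemma k_ne_zero'' : (k : ZMod n) ≠ 0 := by
  haveI : NeZero n := ⟨by omega⟩
  intro h2
  rw [ZMod.natCast_eq_zero_iff] at h2
  have := Nat.le_of_dvd (by omega) h2
  omega

include hk hnk in
omit hn in
lemma two_k_ne_zero'' : (k : ZMod n) + (k : ZMod n) ≠ 0 := by
  haveI : NeZero n := ⟨by omega⟩
  intro h2
  have h3 : ((2*k:ℕ) : ZMod n) = 0 := by push_cast; rw [two_mul]; exact h2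
  rw [ZMod.natCast_eq_zero_iff] at h3
  have := Nat.le_of_dvd (by omega) h3
  omega


include hn in
lemma adj_false (i : ZMod n) (w : Bool × ZMod n) :
    (genPetersen n k).Adj (false, i) w ↔
      w = (false, i+1) ∨ w = (false, i-1) ∨ w = (true, i) := by
  constructor
  · rintro h
    rw [genPetersen_adj] at h
    obtain ⟨hne, h⟩ := h
    obtain ⟨b, j⟩ := w
    simp only [Prod.mk.injEq]
    rcases h with (⟨h1,h2,h3⟩|⟨h1,h2,h3⟩|⟨h1,h2,h3⟩)|(⟨h1,h2,h3⟩|⟨h1,h2,h3⟩|⟨h1,h2,h3⟩)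
    · exact Or.inl ⟨h2, h3⟩
    · exact Or.inr (Or.inr ⟨h2, h3⟩)
    · exact absurd h1 (by simp)
    · exact Or.inr (Or.inl ⟨h1, eq_sub_of_add_eq h3.symm⟩)
    · exact absurd h2 (by simp)
    · exact absurd h2 (by simp)
  · rintro (rfl | rfl | rfl) <;> rw [genPetersen_adj]
    · refine ⟨?_, Or.inl (Or.inl ⟨rfl, rfl, rfl⟩)⟩
      intro h
      rw [Prod.mk.injEq] at h
      exact one_ne_zero'' hn (left_eq_add.mp h.2)
    · refine ⟨?_, Or.inr (Or.inl ⟨rfl, rfl, by show i = i - 1 + 1; ring⟩)⟩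
      intro h
      rw [Prod.mk.injEq] at h
      exact one_ne_zero'' hn (sub_eq_self.mp h.2.symm)
    · exact ⟨by simp, Or.inl (Or.inr (Or.inl ⟨rfl, rfl, rfl⟩))⟩

include hk hnk in
omit hn in
lemma adj_true (i : ZMod n) (w : Bool × ZMod n) :
    (genPetersen n k).Adj (true, i) w ↔
      w = (true, i+(k : ZMod n)) ∨ w = (true, i-(k : ZMod n)) ∨ w = (false, i) := by
  constructor
  · rintro h
    rw [genPetersen_adj] at h
    obtain ⟨hne, h⟩ := h
    obtain ⟨b, j⟩ := w
    simp only [Prod.mk.injEq]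
    rcases h with (⟨h1,h2,h3⟩|⟨h1,h2,h3⟩|⟨h1,h2,h3⟩)|(⟨h1,h2,h3⟩|⟨h1,h2,h3⟩|⟨h1,h2,h3⟩)
    · exact absurd h1 (by simp)
    · exact absurd h1 (by simp)
    · exact Or.inl ⟨h2, h3⟩
    · exact absurd h2 (by simp)
    · exact Or.inr (Or.inr ⟨h1, h3.symm⟩)
    · exact Or.inr (Or.inl ⟨h1, eq_sub_of_add_eq h3.symm⟩)
  · rintro (rfl | rfl | rfl) <;> rw [genPetersen_adj]
    · refine ⟨?_, Or.inl (Or.inr (Or.inr ⟨rfl, rfl, rfl⟩))⟩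
      intro h
      rw [Prod.mk.injEq] at h
      exact k_ne_zero'' hk hnk (left_eq_add.mp h.2)
    · refine ⟨?_, Or.inr (Or.inr (Or.inr ⟨rfl, rfl, by show i = i - (k:ZMod n) + (k:ZMod n); ring⟩))⟩
      intro h
      rw [Prod.mk.injEq] at h
      exact k_ne_zero'' hk hnk (sub_eq_self.mp h.2.symm)
    · exact ⟨by simp, Or.inr (Or.inr (Or.inl ⟨rfl, rfl, rfl⟩))⟩

end Adj
section Generic
variable {V : Type*} {G : SimpleGraph V} {N : ℕ} {c : Sym2 V → Fin N}

lemma star_prop (hc : IsStarEdgeColoring G c) {v a b : V}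
    (ha : G.Adj v a) (hb : G.Adj v b) (hab : a ≠ b) : c s(v, a) ≠ c s(v, b) := by
  refine hc.1 (G.mem_edgeSet.mpr ha) (G.mem_edgeSet.mpr hb) ?_ ⟨v, Sym2.mem_mk_left v a, Sym2.mem_mk_left v b⟩
  intro h
  exact hab (Sym2.congr_right.mp h)

/-- two distinct neighbors of a vertex have distinct "missing colors". -/
lemma star_claim2 (hc : IsStarEdgeColoring G c) (M : V → Fin N)
    (Hnot : ∀ v w, G.Adj v w → c s(v, w) ≠ M v)
    (Hloc : ∀ v δ, δ ≠ M v → ∃ w, G.Adj v w ∧ c s(v, w) = δ)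
    {u x y : V} (hux : G.Adj u x) (huy : G.Adj u y) (hxy : x ≠ y) : M x ≠ M y := by
  intro hM
  have hαβ : c s(u, x) ≠ c s(u, y) := star_prop hc hux huy hxy
  have hμα : M x ≠ c s(u, x) := by
    have := Hnot x u hux.symm
    rw [Sym2.eq_swap] at this
    exact fun h => this h.symm
  have hμβ : M y ≠ c s(u, y) := by
    have := Hnot y u huy.symm
    rw [Sym2.eq_swap] at this
    exact fun h => this h.symm
  obtain ⟨s, hs, hcs⟩ := Hloc x (c s(u, y)) (by rw [hM]; exact fun h => hμβ h.symm)
  obtain ⟨t, ht, hct⟩ := Hloc y (c s(u, x)) (by rw [← hM]; exact fun h => hμα h.symm)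
  refine hc.2 s x u y t hs.symm hux.symm huy ht ?_ ?_ ?_ ?_ ?_ ⟨?_, ?_⟩
  · -- s ≠ u
    intro h; subst h
    exact hαβ (by rw [Sym2.eq_swap]; exact hcs)
  · -- s ≠ y
    intro h; subst h
    have := star_prop hc hs.symm huy.symm (G.ne_of_adj hux).symm
    rw [Sym2.eq_swap, hcs, Sym2.eq_swap] at this
    exact this rfl
  · exact hxy
  · -- x ≠ t
    intro h; subst h
    have := star_prop hc ht.symm hux.symm (G.ne_of_adj huy).symm
    rw [Sym2.eq_swap, hct, Sym2.eq_swap] at this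
    exact this rfl
  · -- u ≠ t
    intro h; subst h
    rw [Sym2.eq_swap] at hct
    exact hαβ hct.symm
  · rw [Sym2.eq_swap, hcs]
  · rw [Sym2.eq_swap, hct]

end Generic

lemma pick2 : ∀ γ δ : Fin 4, γ ≠ δ → ∃ α β : Fin 4,
    α ≠ β ∧ α ≠ γ ∧ α ≠ δ ∧ β ≠ γ ∧ β ≠ δ := by decide

section Claim1
variable {V : Type*} {G : SimpleGraph V} {c : Sym2 V → Fin 4}

lemma star_claim1 (hc : IsStarEdgeColoring G c) (M : V → Fin 4)
    (Hnot : ∀ v w, G.Adj v w → c s(v, w) ≠ M v)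
    (Hloc : ∀ v δ, δ ≠ M v → ∃ w, G.Adj v w ∧ c s(v, w) = δ)
    {u v : V} (huv : G.Adj u v) : M u ≠ M v := by
  intro hM
  have hγδ : c s(u, v) ≠ M u := Hnot u v huv
  obtain ⟨α, β, hab, haγ, haδ, hbγ, hbδ⟩ := pick2 (c s(u, v)) (M u) hγδ
  obtain ⟨uα, huα, hcuα⟩ := Hloc u α haδ
  obtain ⟨uβ, huβ, hcuβ⟩ := Hloc u β hbδ
  obtain ⟨vα, hvα, hcvα⟩ := Hloc v α (by rw [← hM]; exact haδ)
  obtain ⟨vβ, hvβ, hcvβ⟩ := Hloc v β (by rw [← hM]; exact hbδ)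
  -- generic step 1
  have step1 : ∀ ε uε vε, G.Adj u uε → G.Adj v vε → c s(u, uε) = ε → c s(v, vε) = ε →
      ε ≠ c s(u,v) → M uε = c s(u, v) := by
    intro ε uε vε huε hvε hcuε hcvε hεγ
    by_contra hne
    obtain ⟨z, hz, hcz⟩ := Hloc uε (c s(u,v)) (fun h => hne h.symm)
    refine hc.2 z uε u v vε hz.symm huε.symm huv hvε ?_ ?_ ?_ ?_ ?_ ⟨?_, ?_⟩
    · -- z ≠ u
      intro h; subst h
      exact hεγ (by rw [← hcuε, Sym2.eq_swap]; exact hcz)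
    · -- z ≠ v
      intro h; subst h
      have := star_prop hc hz.symm huv.symm (G.ne_of_adj huε).symm
      rw [Sym2.eq_swap, hcz, Sym2.eq_swap] at this
      exact this rfl
    · -- uε ≠ v
      intro h; subst h
      exact hεγ (hcuε ▸ rfl)
    · -- uε ≠ vε
      intro h; subst h
      have := star_prop hc huε.symm hvε.symm (G.ne_of_adj huv)
      rw [Sym2.eq_swap, hcuε, Sym2.eq_swap, hcvε] at this
      exact this rfl
    · -- u ≠ vε
      intro h; subst h
      exact hεγ (by rw [← hcvε, Sym2.eq_swap])
    · rw [Sym2.eq_swap]; exact hcz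
    · rw [Sym2.eq_swap, hcuε, hcvε]
  have hPuα : M uα = c s(u, v) := step1 α uα vα huα hvα hcuα hcvα haγ
  have hPuβ : M uβ = c s(u, v) := step1 β uβ vβ huβ hvβ hcuβ hcvβ hbγ
  obtain ⟨w, hw, hcw⟩ := Hloc uα β (by rw [hPuα]; exact hbγ)
  obtain ⟨t, ht, hct⟩ := Hloc uβ α (by rw [hPuβ]; exact haγ)
  refine hc.2 t uβ u uα w ht.symm huβ.symm huα hw ?_ ?_ ?_ ?_ ?_ ⟨?_, ?_⟩
  · -- t ≠ u
    intro h; subst h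
    rw [Sym2.eq_swap, hcuβ] at hct
    exact hab hct.symm
  · -- t ≠ uα
    intro h; subst h
    have := star_prop hc ht.symm huα.symm (G.ne_of_adj huβ).symm
    rw [Sym2.eq_swap, hct, Sym2.eq_swap, hcuα] at this
    exact this rfl
  · -- uβ ≠ uα
    intro h; subst h
    rw [hcuβ] at hcuα
    exact hab hcuα.symm
  · -- uβ ≠ w
    intro h; subst h
    have := star_prop hc hw.symm huβ.symm (G.ne_of_adj huα).symm
    rw [Sym2.eq_swap, hcw, Sym2.eq_swap, hcuβ] at this
    exact this rfl
  · -- u ≠ w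
    intro h; subst h
    rw [Sym2.eq_swap, hcuα] at hcw
    exact hab hcw
  · rw [Sym2.eq_swap, hct, hcuα]
  · rw [Sym2.eq_swap, hcuβ, hcw]

end Claim1

lemma quad : ∀ a b c d : Fin 4, a ≠ b → a ≠ c → a ≠ d → b ≠ c → b ≠ d → c ≠ d →
    ∀ x : Fin 4, x = a ∨ x = b ∨ x = c ∨ x = d := by decide

lemma core (n k : ℕ) (hn : 3 ≤ n) (hk : 1 ≤ k) (hnk : 2 * k + 1 ≤ n)
    (d e : ZMod n → Fin 4) (κ : ZMod n) (hκ : κ = (k : ZMod n))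
    (Hd1 : ∀ i, d i ≠ d (i+1))
    (Hd2 : ∀ i, d i ≠ d (i+1+1))
    (Hde0 : ∀ i, d i ≠ e i)
    (HdeL : ∀ i, e i ≠ d (i+1))
    (HdeR : ∀ i, e (i+1) ≠ d i)
    (HI : ∀ i, e i ≠ e (i+κ))
    (HIIa : ∀ i, e (i+κ) ≠ d i)
    (HIIb : ∀ i, e i ≠ d (i+κ))
    (HIV : ∀ i, e i ≠ e (i+κ+κ)) :
    n % 4 = 0 ∧ k % 2 = 1 := by
  have cov : ∀ j x, x = d (j-1) ∨ x = d j ∨ x = d (j+1) ∨ x = e j := by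
    intro j
    refine quad _ _ _ _ ?_ ?_ ?_ (Hd1 j) (Hde0 j) ((HdeL j).symm)
    · have := Hd1 (j-1); rwa [show j - 1 + 1 = j from by ring] at this
    · have := Hd2 (j-1); rwa [show j - 1 + 1 + 1 = j + 1 from by ring] at this
    · have := HdeR (j-1); rw [show j - 1 + 1 = j from by ring] at this; exact this.symm
  -- forward propagation of a "non-alternation"
  have step : ∀ r, e (r+1) = e r → e (r+κ+1) = e (r+κ) ∧ d (r+κ-1) = e r := by
    intro r h
    have hE1 : e r ≠ e (r+κ) := HI r
    have hE2 : e r ≠ e (r+κ+1) := by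
      have := HI (r+1); rw [h, show r + 1 + κ = r + κ + 1 from by ring] at this; exact this
    have hE3 : e r ≠ d (r+κ) := HIIb r
    have hE4 : e r ≠ d (r+κ+1) := by
      have := HIIb (r+1); rw [h, show r + 1 + κ = r + κ + 1 from by ring] at this; exact this
    have hd : d (r+κ-1) = e r := by
      rcases cov (r+κ) (e r) with hx | hx | hx | hx
      · exact hx.symm
      · exact absurd hx hE3
      · exact absurd hx hE4
      · exact absurd hx hE1
    have hd2 : d (r+κ+1+1) = e r := by
      rcases cov (r+κ+1) (e r) with hx | hx | hx | hx
      · rw [show r + κ + 1 - 1 = r + κ from by ring] at hx; exact absurd hx hE3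
      · exact absurd hx hE4
      · exact hx.symm
      · exact absurd hx hE2
    refine ⟨?_, hd⟩
    rcases cov (r+κ) (e (r+κ+1)) with hx | hx | hx | hx
    · rw [hd, ← hd2] at hx
      exact absurd hx (HdeL (r+κ+1))
    · exact absurd hx (HdeR (r+κ))
    · exact absurd hx (Hde0 (r+κ+1)).symm
    · exact hx
  have back : ∀ r, e (r+1) = e r → d (r-κ-1) = e r := by
    intro r h
    have k1 : r - κ + κ = r := by ring
    have k2 : r - κ + 1 + κ = r + 1 := by ring
    have hE1 : e r ≠ e (r-κ) := by
      have := HI (r-κ); rw [k1] at this; exact this.symm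
    have hE2 : e r ≠ e (r-κ+1) := by
      have := HI (r-κ+1); rw [k2, h] at this; exact this.symm
    have hE3 : e r ≠ d (r-κ) := by
      have := HIIa (r-κ); rwa [k1] at this
    have hE4 : e r ≠ d (r-κ+1) := by
      have := HIIa (r-κ+1); rwa [k2, h] at this
    rcases cov (r-κ) (e r) with hx | hx | hx | hx
    · exact hx.symm
    · exact absurd hx hE3
    · exact absurd hx hE4
    · exact absurd hx hE1
  have alt : ∀ r, e (r+1) ≠ e r := by
    intro r h
    obtain ⟨h1, hA⟩ := step r h
    obtain ⟨h2, _⟩ := step (r+κ) h1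
    have h3 := back (r+κ+κ) h2
    rw [show r + κ + κ - κ - 1 = r + κ - 1 from by ring, hA] at h3
    exact HIV r h3
  have altd : ∀ i, d (i+1+1) = e i ∧ e (i+1) = d (i-1) := by
    intro i
    have hfst : d (i+1+1) = e i := by
      rcases cov i (d (i+1+1)) with hx | hx | hx | hx
      · exfalso
        apply alt i
        rcases cov i (e (i+1)) with hy | hy | hy | hy
        · rw [← hx] at hy
          exact absurd hy (HdeL (i+1))
        · exact absurd hy (HdeR i)
        · exact absurd hy (Hde0 (i+1)).symm
        · exact hy
      · exact absurd hx (Hd2 i).symm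
      · exact absurd hx (Hd1 (i+1)).symm
      · exact hx
    refine ⟨hfst, ?_⟩
    rcases cov i (e (i+1)) with hy | hy | hy | hy
    · exact hy
    · exact absurd hy (HdeR i)
    · exact absurd hy (Hde0 (i+1)).symm
    · exact absurd hy (alt i)
  have per4 : ∀ i, d (i+1+1+1+1) = d i := by
    intro i
    have h1 := (altd (i+1+1)).1
    have h2 := (altd (i+1)).2
    rw [show i + 1 - 1 = i from by ring] at h2
    rw [h1, h2]
  have perN : ∀ (m : ℕ) (i : ZMod n), d (i + ((4*m : ℕ) : ZMod n)) = d i := by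
    intro m
    induction m with
    | zero => intro i; norm_num
    | succ m ih =>
      intro i
      have hc : (((4*(m+1) : ℕ)) : ZMod n) = ((4*m : ℕ) : ZMod n) + 1 + 1 + 1 + 1 := by
        push_cast; ring
      rw [hc, show i + (((4*m : ℕ) : ZMod n) + 1 + 1 + 1 + 1)
            = i + ((4*m : ℕ) : ZMod n) + 1 + 1 + 1 + 1 from by ring, per4, ih]
  have nd3 : ∀ i, d (i+1+1+1) ≠ d i := by
    intro i
    have := (altd (i+1)).1
    rw [this]
    have := HdeR i
    exact this
  constructor
  · -- n % 4 = 0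
    by_contra hr
    have hcases : n % 4 = 1 ∨ n % 4 = 2 ∨ n % 4 = 3 := by omega
    have key : ∀ (m j : ℕ), 4 * m = j + (4*m - j)/n * n → ∀ i, d (i + ((j:ℕ) : ZMod n)) = d i := by
      intro m j hj i
      have := perN m i
      rwa [show ((4*m : ℕ) : ZMod n) = ((j:ℕ) : ZMod n) from by
        rw [hj]; push_cast [ZMod.natCast_self]; ring] at this
    rcases hcases with hr1 | hr2 | hr3
    · have h4m : 4 * (3*(n/4)+1) = 1 + 3 * n := by omega
      have := perN (3*(n/4)+1) 0
      rw [show ((4*(3*(n/4)+1) : ℕ) : ZMod n) = 1 from by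
        rw [h4m]; push_cast [ZMod.natCast_self]; ring] at this
      exact Hd1 0 (by rw [zero_add] at this ⊢; exact this.symm)
    · have h4m : 4 * (n/4+1) = 2 + n := by omega
      have := perN (n/4+1) 0
      rw [show ((4*(n/4+1) : ℕ) : ZMod n) = 1 + 1 from by
        rw [h4m]; push_cast [ZMod.natCast_self]; ring] at this
      exact Hd2 0 (by rw [show (0:ZMod n) + (1+1) = 0 + 1 + 1 from by ring] at this; exact this.symm)
    · have h4m : 4 * (n/4+1) = 1 + n := by omega
      have := perN (n/4+1) 0
      rw [show ((4*(n/4+1) : ℕ) : ZMod n) = 1 from by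
        rw [h4m]; push_cast [ZMod.natCast_self]; ring] at this
      exact Hd1 0 (by rw [zero_add] at this ⊢; exact this.symm)
  · -- k odd
    by_contra hke
    have hcases : k % 4 = 0 ∨ k % 4 = 2 := by omega
    have he : ∀ i, e (i+κ) = d (i+κ+1+1) := fun i => ((altd (i+κ)).1).symm
    rcases hcases with h0 | h2
    · -- κ = cast (4*(k/4))
      obtain ⟨m, hm⟩ : ∃ m, k = 4*m := ⟨k/4, by omega⟩
      have hkc : κ = ((4*m : ℕ) : ZMod n) := by rw [hκ, hm]
      apply HI 0
      rw [he 0, show (0:ZMod n) + κ + 1 + 1 = (0 + 1 + 1) + κ from by ring, hkc, perN]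
      exact ((altd 0).1).symm
    · -- κ = cast(4*(k/4)) + 1 + 1
      obtain ⟨m, hm⟩ : ∃ m, k = 4*m + 2 := ⟨k/4, by omega⟩
      have hkc : κ = ((4*m : ℕ) : ZMod n) + 1 + 1 := by
        rw [hκ, hm]; push_cast; ring
      apply HIIa 0
      rw [he 0, hkc, show (0:ZMod n) + (((4*m : ℕ) : ZMod n) + 1 + 1) + 1 + 1
            = (0 + ((4*m : ℕ) : ZMod n)) + 1 + 1 + 1 + 1 from by ring, per4, perN]
def missc (a b c : Fin 4) : Fin 4 :=
  if (0:Fin 4) ≠ a ∧ (0:Fin 4) ≠ b ∧ (0:Fin 4) ≠ c then 0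
  else if (1:Fin 4) ≠ a ∧ (1:Fin 4) ≠ b ∧ (1:Fin 4) ≠ c then 1
  else if (2:Fin 4) ≠ a ∧ (2:Fin 4) ≠ b ∧ (2:Fin 4) ≠ c then 2
  else 3

lemma missc_ne : ∀ a b c : Fin 4, a ≠ b → a ≠ c → b ≠ c →
    missc a b c ≠ a ∧ missc a b c ≠ b ∧ missc a b c ≠ c := by decide

lemma missc_cov : ∀ a b c x : Fin 4, a ≠ b → a ≠ c → b ≠ c →
    x = a ∨ x = b ∨ x = c ∨ x = missc a b c := by decide
lemma necessity (n k : ℕ) (hn : 3 ≤ n) (hk : 1 ≤ k) (hnk : 2 * k + 1 ≤ n)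
    (c : Sym2 (Bool × ZMod n) → Fin 4) (hc : IsStarEdgeColoring (genPetersen n k) c) :
    n % 4 = 0 ∧ k % 2 = 1 := by
  set κ : ZMod n := (k : ZMod n) with hκ
  have AF1 : ∀ i : ZMod n, (genPetersen n k).Adj (false,i) (false,i+1) :=
    fun i => (adj_false hn i _).mpr (Or.inl rfl)
  have AF2 : ∀ i : ZMod n, (genPetersen n k).Adj (false,i) (false,i-1) :=
    fun i => (adj_false hn i _).mpr (Or.inr (Or.inl rfl))
  have AF3 : ∀ i : ZMod n, (genPetersen n k).Adj (false,i) (true,i) :=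
    fun i => (adj_false hn i _).mpr (Or.inr (Or.inr rfl))
  have AT1 : ∀ i : ZMod n, (genPetersen n k).Adj (true,i) (true,i+κ) :=
    fun i => (adj_true hk hnk i _).mpr (Or.inl rfl)
  have AT2 : ∀ i : ZMod n, (genPetersen n k).Adj (true,i) (true,i-κ) :=
    fun i => (adj_true hk hnk i _).mpr (Or.inr (Or.inl rfl))
  have AT3 : ∀ i : ZMod n, (genPetersen n k).Adj (true,i) (false,i) :=
    fun i => (adj_true hk hnk i _).mpr (Or.inr (Or.inr rfl))
  have hZ2 : (2:ZMod n) ≠ 0 := two_ne_zero'' hn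
  have hZκ2 : κ + κ ≠ 0 := two_k_ne_zero'' hk hnk
  have df : ∀ i : ZMod n, ((false,i+1) : Bool × ZMod n) ≠ (false,i-1) := by
    intro i h; rw [Prod.mk.injEq] at h; exact hZ2 (by linear_combination h.2)
  have dt : ∀ i : ZMod n, ((true,i+κ) : Bool × ZMod n) ≠ (true,i-κ) := by
    intro i h; rw [Prod.mk.injEq] at h; exact hZκ2 (by linear_combination h.2)
  obtain ⟨M, Mf, Mt⟩ : ∃ M : Bool × ZMod n → Fin 4,
      (∀ i, M (false,i) = missc (c s((false,i),(false,i+1))) (c s((false,i),(false,i-1)))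
        (c s((false,i),(true,i)))) ∧
      (∀ i, M (true,i) = missc (c s((true,i),(true,i+κ))) (c s((true,i),(true,i-κ)))
        (c s((true,i),(false,i)))) := by
    refine ⟨fun w => if w.1 then missc (c s(w,(true,w.2+κ))) (c s(w,(true,w.2-κ)))
      (c s(w,(false,w.2))) else missc (c s(w,(false,w.2+1))) (c s(w,(false,w.2-1)))
      (c s(w,(true,w.2))), fun i => rfl, fun i => rfl⟩
  have cdF : ∀ i : ZMod n, c s((false,i),(false,i+1)) ≠ c s((false,i),(false,i-1)) ∧
      c s((false,i),(false,i+1)) ≠ c s((false,i),(true,i)) ∧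
      c s((false,i),(false,i-1)) ≠ c s((false,i),(true,i)) :=
    fun i => ⟨star_prop hc (AF1 i) (AF2 i) (df i),
      star_prop hc (AF1 i) (AF3 i) (by simp),
      star_prop hc (AF2 i) (AF3 i) (by simp)⟩
  have cdT : ∀ i : ZMod n, c s((true,i),(true,i+κ)) ≠ c s((true,i),(true,i-κ)) ∧
      c s((true,i),(true,i+κ)) ≠ c s((true,i),(false,i)) ∧
      c s((true,i),(true,i-κ)) ≠ c s((true,i),(false,i)) :=
    fun i => ⟨star_prop hc (AT1 i) (AT2 i) (dt i),
      star_prop hc (AT1 i) (AT3 i) (by simp),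
      star_prop hc (AT2 i) (AT3 i) (by simp)⟩
  have Hnot : ∀ v w, (genPetersen n k).Adj v w → c s(v,w) ≠ M v := by
    rintro ⟨b,j⟩ w hadj
    cases b
    · obtain ⟨h1, h2, h3⟩ := cdF j
      rcases (adj_false hn j w).mp hadj with rfl|rfl|rfl <;> rw [Mf]
      · exact ((missc_ne _ _ _ h1 h2 h3).1).symm
      · exact ((missc_ne _ _ _ h1 h2 h3).2.1).symm
      · exact ((missc_ne _ _ _ h1 h2 h3).2.2).symm
    · obtain ⟨h1, h2, h3⟩ := cdT j
      rcases (adj_true hk hnk j w).mp hadj with rfl|rfl|rfl <;> rw [Mt]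
      · exact ((missc_ne _ _ _ h1 h2 h3).1).symm
      · exact ((missc_ne _ _ _ h1 h2 h3).2.1).symm
      · exact ((missc_ne _ _ _ h1 h2 h3).2.2).symm
  have Hloc : ∀ v δ, δ ≠ M v → ∃ w, (genPetersen n k).Adj v w ∧ c s(v,w) = δ := by
    rintro ⟨b,j⟩ δ hδ
    cases b
    · obtain ⟨h1, h2, h3⟩ := cdF j
      rcases missc_cov _ _ _ δ h1 h2 h3 with h|h|h|h
      · exact ⟨(false,j+1), AF1 j, h.symm⟩
      · exact ⟨(false,j-1), AF2 j, h.symm⟩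
      · exact ⟨(true,j), AF3 j, h.symm⟩
      · exact absurd (h.trans (Mf j).symm) hδ
    · obtain ⟨h1, h2, h3⟩ := cdT j
      rcases missc_cov _ _ _ δ h1 h2 h3 with h|h|h|h
      · exact ⟨(true,j+κ), AT1 j, h.symm⟩
      · exact ⟨(true,j-κ), AT2 j, h.symm⟩
      · exact ⟨(false,j), AT3 j, h.symm⟩
      · exact absurd (h.trans (Mt j).symm) hδ
  have C1 : ∀ u v, (genPetersen n k).Adj u v → M u ≠ M v :=
    fun u v h => star_claim1 hc M Hnot Hloc h
  have C2 : ∀ u x y, (genPetersen n k).Adj u x → (genPetersen n k).Adj u y → x ≠ y →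
      M x ≠ M y := fun u x y hx hy hxy => star_claim2 hc M Hnot Hloc hx hy hxy
  refine core n k hn hk hnk (fun i => M (false,i)) (fun i => M (true,i)) κ hκ
    ?_ ?_ ?_ ?_ ?_ ?_ ?_ ?_ ?_
  · -- Hd1
    exact fun i => C1 _ _ (AF1 i)
  · -- Hd2 : d i ≠ d (i+1+1)
    intro i
    have hx : (genPetersen n k).Adj (false,i+1) (false,i) := by
      have := AF2 (i+1); rwa [show i + 1 - 1 = i from by ring] at this
    refine C2 (false,i+1) _ _ hx (AF1 (i+1)) ?_
    intro h; rw [Prod.mk.injEq] at h; exact hZ2 (by linear_combination -h.2)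
  · -- Hde0
    exact fun i => C1 _ _ (AF3 i)
  · -- HdeL : e i ≠ d (i+1)
    exact fun i => C2 (false,i) _ _ (AF3 i) (AF1 i) (by simp)
  · -- HdeR : e (i+1) ≠ d i
    intro i
    have hx : (genPetersen n k).Adj (false,i+1) (false,i) := by
      have := AF2 (i+1); rwa [show i + 1 - 1 = i from by ring] at this
    exact C2 (false,i+1) _ _ (AF3 (i+1)) hx (by simp)
  · -- HI
    exact fun i => C1 _ _ (AT1 i)
  · -- HIIa : e (i+κ) ≠ d i
    exact fun i => C2 (true,i) _ _ (AT1 i) (AT3 i) (by simp)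
  · -- HIIb : e i ≠ d (i+κ)
    intro i
    have hx : (genPetersen n k).Adj (true,i+κ) (true,i) := by
      have := AT2 (i+κ); rwa [show i + κ - κ = i from by ring] at this
    exact C2 (true,i+κ) _ _ hx (AT3 (i+κ)) (by simp)
  · -- HIV : e i ≠ e (i+κ+κ)
    intro i
    have hx : (genPetersen n k).Adj (true,i+κ) (true,i) := by
      have := AT2 (i+κ); rwa [show i + κ - κ = i from by ring] at this
    refine C2 (true,i+κ) _ _ hx (AT1 (i+κ)) ?_
    intro h; rw [Prod.mk.injEq] at h
    exact hZκ2 (by linear_combination -h.2)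
lemma pick3 : ∀ γ : Fin 3, ∃ α : Fin 3, α ≠ γ := by decide

lemma cov3 : ∀ a b c : Fin 3, a ≠ b → a ≠ c → b ≠ c → ∀ x : Fin 3, x = a ∨ x = b ∨ x = c := by
  decide

lemma no_three (n k : ℕ) (hn : 3 ≤ n) (hk : 1 ≤ k) (hnk : 2 * k + 1 ≤ n)
    (c : Sym2 (Bool × ZMod n) → Fin 3) (hc : IsStarEdgeColoring (genPetersen n k) c) :
    False := by
  set κ : ZMod n := (k : ZMod n) with hκ
  have AF1 : ∀ i : ZMod n, (genPetersen n k).Adj (false,i) (false,i+1) :=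
    fun i => (adj_false hn i _).mpr (Or.inl rfl)
  have AF2 : ∀ i : ZMod n, (genPetersen n k).Adj (false,i) (false,i-1) :=
    fun i => (adj_false hn i _).mpr (Or.inr (Or.inl rfl))
  have AF3 : ∀ i : ZMod n, (genPetersen n k).Adj (false,i) (true,i) :=
    fun i => (adj_false hn i _).mpr (Or.inr (Or.inr rfl))
  have AT1 : ∀ i : ZMod n, (genPetersen n k).Adj (true,i) (true,i+κ) :=
    fun i => (adj_true hk hnk i _).mpr (Or.inl rfl)
  have AT2 : ∀ i : ZMod n, (genPetersen n k).Adj (true,i) (true,i-κ) :=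
    fun i => (adj_true hk hnk i _).mpr (Or.inr (Or.inl rfl))
  have AT3 : ∀ i : ZMod n, (genPetersen n k).Adj (true,i) (false,i) :=
    fun i => (adj_true hk hnk i _).mpr (Or.inr (Or.inr rfl))
  have hZ2 : (2:ZMod n) ≠ 0 := two_ne_zero'' hn
  have hZκ2 : κ + κ ≠ 0 := two_k_ne_zero'' hk hnk
  have df : ∀ i : ZMod n, ((false,i+1) : Bool × ZMod n) ≠ (false,i-1) := by
    intro i h; rw [Prod.mk.injEq] at h; exact hZ2 (by linear_combination h.2)
  have dt : ∀ i : ZMod n, ((true,i+κ) : Bool × ZMod n) ≠ (true,i-κ) := by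
    intro i h; rw [Prod.mk.injEq] at h; exact hZκ2 (by linear_combination h.2)
  have Hloc : ∀ (v : Bool × ZMod n) (δ : Fin 3), ∃ w, (genPetersen n k).Adj v w ∧ c s(v,w) = δ := by
    rintro ⟨b,j⟩ δ
    cases b
    · have h1 := star_prop hc (AF1 j) (AF2 j) (df j)
      have h2 := star_prop hc (AF1 j) (AF3 j) (by simp)
      have h3 := star_prop hc (AF2 j) (AF3 j) (by simp)
      rcases cov3 _ _ _ h1 h2 h3 δ with h|h|h
      · exact ⟨(false,j+1), AF1 j, h.symm⟩
      · exact ⟨(false,j-1), AF2 j, h.symm⟩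
      · exact ⟨(true,j), AF3 j, h.symm⟩
    · have h1 := star_prop hc (AT1 j) (AT2 j) (dt j)
      have h2 := star_prop hc (AT1 j) (AT3 j) (by simp)
      have h3 := star_prop hc (AT2 j) (AT3 j) (by simp)
      rcases cov3 _ _ _ h1 h2 h3 δ with h|h|h
      · exact ⟨(true,j+κ), AT1 j, h.symm⟩
      · exact ⟨(true,j-κ), AT2 j, h.symm⟩
      · exact ⟨(false,j), AT3 j, h.symm⟩
  -- the path argument
  set u : Bool × ZMod n := (false, 0)
  set v : Bool × ZMod n := (false, (0:ZMod n)+1)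
  have huv : (genPetersen n k).Adj u v := AF1 0
  obtain ⟨α, hαγ⟩ := pick3 (c s(u,v))
  obtain ⟨w, hw, hcw⟩ := Hloc u α
  obtain ⟨x, hx, hcx⟩ := Hloc v α
  obtain ⟨y, hy, hcy⟩ := Hloc x (c s(u,v))
  refine hc.2 w u v x y hw.symm huv hx hy ?_ ?_ ?_ ?_ ?_ ⟨?_, ?_⟩
  · -- w ≠ v
    intro h; subst h
    exact hαγ (by rw [← hcw])
  · -- w ≠ x
    intro h; subst h
    have := star_prop hc hw.symm hx.symm (G := genPetersen n k) ((genPetersen n k).ne_of_adj huv)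
    rw [Sym2.eq_swap, hcw, Sym2.eq_swap, hcx] at this
    exact this rfl
  · -- u ≠ x
    intro h; subst h
    rw [Sym2.eq_swap] at hcx
    exact hαγ (by rw [← hcx, Sym2.eq_swap])
  · -- u ≠ y
    intro h; subst h
    have := star_prop hc hy.symm huv ((genPetersen n k).ne_of_adj hx).symm
    rw [Sym2.eq_swap, hcy] at this
    exact this rfl
  · -- v ≠ y
    intro h; subst h
    rw [Sym2.eq_swap] at hcx
    rw [hcx] at hcy
    exact hαγ hcy
  · rw [Sym2.eq_swap, hcw, hcx]
  · rw [hcy]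

section Glue
variable {V : Type*} {G : SimpleGraph V} {N : ℕ} {c : Sym2 V → Fin N}

lemma isStar_of_vertex
    (h1 : ∀ v a b, G.Adj v a → G.Adj v b → a ≠ b → c s(v,a) ≠ c s(v,b))
    (h2 : ∀ v0 v1 v2 v3 v4 : V, G.Adj v0 v1 → G.Adj v1 v2 → G.Adj v2 v3 → G.Adj v3 v4 →
      v0 ≠ v2 → v0 ≠ v3 → v1 ≠ v3 → v1 ≠ v4 → v2 ≠ v4 →
      ¬ (c s(v0, v1) = c s(v2, v3) ∧ c s(v1, v2) = c s(v3, v4))) :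
    IsStarEdgeColoring G c := by
  constructor
  · intro e f he hf hef hshare
    induction e with
    | _ a b =>
      induction f with
      | _ a' b' =>
        obtain ⟨v, hv, hv'⟩ := hshare
        rw [SimpleGraph.mem_edgeSet] at he hf
        rcases Sym2.mem_iff.mp hv with rfl | rfl <;>
          rcases Sym2.mem_iff.mp hv' with rfl | rfl
        · exact h1 v b b' he hf (fun h => hef (by rw [h]))
        · rw [Sym2.eq_swap (a := a') (b := v)]
          exact h1 v b a' he hf.symm (fun h => hef (by rw [h]; exact Sym2.eq_swap))
        · rw [Sym2.eq_swap (a := a) (b := v)]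
          exact h1 v a b' he.symm hf (fun h => hef (by rw [h, Sym2.eq_swap]))
        · rw [Sym2.eq_swap (a := a) (b := v), Sym2.eq_swap (a := a') (b := v)]
          exact h1 v a a' he.symm hf.symm (fun h => hef (by rw [h]))
  · exact h2

lemma star_vertex_of (hc : IsStarEdgeColoring G c) :
    ∀ v a b, G.Adj v a → G.Adj v b → a ≠ b → c s(v,a) ≠ c s(v,b) :=
  fun _ _ _ ha hb hab => star_prop hc ha hb hab

end Glue

lemma star_mono {V : Type*} {G : SimpleGraph V} {a b : ℕ} (hab : a ≤ b)
    (h : ∃ c : Sym2 V → Fin a, IsStarEdgeColoring G c) :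
    ∃ c : Sym2 V → Fin b, IsStarEdgeColoring G c := by
  obtain ⟨c, hc⟩ := h
  refine ⟨fun e => Fin.castLE hab (c e), ?_, ?_⟩
  · intro e f he hf hef hsh h
    exact hc.1 he hf hef hsh (Fin.castLE_injective hab h)
  · intro v0 v1 v2 v3 v4 h01 h12 h23 h34 d02 d03 d13 d14 d24 ⟨e1, e2⟩
    exact hc.2 v0 v1 v2 v3 v4 h01 h12 h23 h34 d02 d03 d13 d14 d24
      ⟨Fin.castLE_injective hab e1, Fin.castLE_injective hab e2⟩
def fO : Fin 4 → Fin 4 := ![0,2,3,1]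
def gO : Fin 4 → Fin 4 := ![2,3,1,0]
def hO : Fin 4 → Fin 4 := ![1,0,2,3]

def cv (i : ZMod 4) : Fin 4 := ⟨ZMod.val i, ZMod.val_lt i⟩

def F4 : Bool × ZMod 4 → Bool × ZMod 4 → Fin 4
  | (false,i), (false,j) =>
      if j = i+1 then fO (cv i) else if i = j+1 then fO (cv j) else 0
  | (false,i), (true,j) => if i = j then gO (cv i) else 0
  | (true,i), (false,j) => if i = j then gO (cv j) else 0
  | (true,i), (true,j) =>
      if j = i+1 then hO (cv i) else if i = j+1 then hO (cv j) else 0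

lemma F4_symm : ∀ a b, F4 a b = F4 b a := by decide

lemma P1 : ∀ v a b : Bool × ZMod 4, (genPetersen 4 1).Adj v a → (genPetersen 4 1).Adj v b →
    a ≠ b → F4 v a ≠ F4 v b := by decide

set_option maxHeartbeats 4000000 in
set_option synthInstance.maxSize 2000 in
set_option synthInstance.maxHeartbeats 1000000 in
lemma P2 : ∀ v0 v1 v2 v3 v4 : Bool × ZMod 4, (genPetersen 4 1).Adj v0 v1 →
    (genPetersen 4 1).Adj v1 v2 → (genPetersen 4 1).Adj v2 v3 → (genPetersen 4 1).Adj v3 v4 →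
    v0 ≠ v2 → v0 ≠ v3 → v1 ≠ v3 → v1 ≠ v4 → v2 ≠ v4 →
    ¬ (F4 v0 v1 = F4 v2 v3 ∧ F4 v1 v2 = F4 v3 v4) := by decide
lemma existence (n k : ℕ) (hn : 3 ≤ n) (hk : 1 ≤ k) (hnk : 2 * k + 1 ≤ n)
    (h4 : n % 4 = 0) (hko : k % 2 = 1) :
    ∃ c : Sym2 (Bool × ZMod n) → Fin 4, IsStarEdgeColoring (genPetersen n k) c := by
  have hdvd : (4:ℕ) ∣ n := Nat.dvd_of_mod_eq_zero h4
  have hn4 : (3:ℕ) ≤ 4 := by norm_num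
  have hk1 : (1:ℕ) ≤ 1 := le_refl 1
  have hnk4 : 2*1+1 ≤ 4 := by norm_num
  have BF1 : ∀ i : ZMod 4, (genPetersen 4 1).Adj (false,i) (false,i+1) :=
    fun i => (adj_false hn4 i _).mpr (Or.inl rfl)
  have BF2 : ∀ i : ZMod 4, (genPetersen 4 1).Adj (false,i) (false,i-1) :=
    fun i => (adj_false hn4 i _).mpr (Or.inr (Or.inl rfl))
  have BF3 : ∀ i : ZMod 4, (genPetersen 4 1).Adj (false,i) (true,i) :=
    fun i => (adj_false hn4 i _).mpr (Or.inr (Or.inr rfl))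
  have BT1 : ∀ i : ZMod 4, (genPetersen 4 1).Adj (true,i) (true,i+1) := by
    intro i
    have := (adj_true hk1 hnk4 i (true, i + ((1:ℕ) : ZMod 4))).mpr (Or.inl rfl)
    rwa [Nat.cast_one] at this
  have BT2 : ∀ i : ZMod 4, (genPetersen 4 1).Adj (true,i) (true,i-1) := by
    intro i
    have := (adj_true hk1 hnk4 i (true, i - ((1:ℕ) : ZMod 4))).mpr (Or.inr (Or.inl rfl))
    rwa [Nat.cast_one] at this
  have BT3 : ∀ i : ZMod 4, (genPetersen 4 1).Adj (true,i) (false,i) :=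
    fun i => (adj_true hk1 hnk4 i _).mpr (Or.inr (Or.inr rfl))
  obtain ⟨ψ, hψadd, hψone, hψk, hψsub⟩ :
      ∃ ψ : ZMod n → ZMod 4, (∀ x y, ψ (x+y) = ψ x + ψ y) ∧ (ψ 1 = 1) ∧
        (ψ ((k : ZMod n)) = (k : ZMod 4)) ∧ (∀ x y, ψ (x-y) = ψ x - ψ y) := by
    refine ⟨fun x => ZMod.castHom hdvd (ZMod 4) x, fun x y => map_add _ x y, map_one _,
      map_natCast _ k, fun x y => map_sub _ x y⟩
  have hk4 : (k : ZMod 4) = 1 ∨ (k : ZMod 4) = 3 := by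
    have hc : k % 4 = 1 ∨ k % 4 = 3 := by omega
    rcases hc with hc | hc
    · left
      obtain ⟨m, hm⟩ : ∃ m, k = 4*m+1 := ⟨k/4, by omega⟩
      rw [hm]; push_cast
      rw [show (4:ZMod 4) = 0 from by decide]; ring
    · right
      obtain ⟨m, hm⟩ : ∃ m, k = 4*m+3 := ⟨k/4, by omega⟩
      rw [hm]; push_cast
      rw [show (4:ZMod 4) = 0 from by decide]; ring
  obtain ⟨φ, hφ⟩ : ∃ φ : Bool × ZMod n → Bool × ZMod 4, ∀ w, φ w = (w.1, ψ w.2) :=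
    ⟨fun w => (w.1, ψ w.2), fun w => rfl⟩
  have hom : ∀ {a b}, (genPetersen n k).Adj a b → (genPetersen 4 1).Adj (φ a) (φ b) := by
    rintro ⟨ba, ia⟩ b hab
    cases ba
    · rcases (adj_false hn ia _).mp hab with rfl|rfl|rfl <;> rw [hφ, hφ]
      · have : ψ (ia + 1) = ψ ia + 1 := by rw [hψadd, hψone]
        rw [show ((false, ia+1).1, ψ (ia+1)) = ((false : Bool), ψ ia + 1) from by rw [this]]
        exact BF1 (ψ ia)
      · have : ψ (ia - 1) = ψ ia - 1 := by rw [hψsub, hψone]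
        rw [show ((false, ia-1).1, ψ (ia-1)) = ((false : Bool), ψ ia - 1) from by rw [this]]
        exact BF2 (ψ ia)
      · exact BF3 (ψ ia)
    · rcases (adj_true hk hnk ia _).mp hab with rfl|rfl|rfl <;> rw [hφ, hφ]
      · have hx : ψ (ia + (k : ZMod n)) = ψ ia + (k : ZMod 4) := by rw [hψadd, hψk]
        rcases hk4 with h1 | h3
        · rw [show (((true, ia + (k:ZMod n)).1 : Bool), ψ (ia + (k:ZMod n)))
              = ((true : Bool), ψ ia + 1) from by rw [hx, h1]]
          exact BT1 (ψ ia)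
        · rw [show (((true, ia + (k:ZMod n)).1 : Bool), ψ (ia + (k:ZMod n)))
              = ((true : Bool), ψ ia - 1) from by rw [hx, h3]; rw [show (3:ZMod 4) = -1 from by decide]; ring_nf]
          exact BT2 (ψ ia)
      · have hx : ψ (ia - (k : ZMod n)) = ψ ia - (k : ZMod 4) := by rw [hψsub, hψk]
        rcases hk4 with h1 | h3
        · rw [show (((true, ia - (k:ZMod n)).1 : Bool), ψ (ia - (k:ZMod n)))
              = ((true : Bool), ψ ia - 1) from by rw [hx, h1]]
          exact BT2 (ψ ia)
        · rw [show (((true, ia - (k:ZMod n)).1 : Bool), ψ (ia - (k:ZMod n)))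
              = ((true : Bool), ψ ia + 1) from by rw [hx, h3]; rw [show (3:ZMod 4) = -1 from by decide]; ring_nf]
          exact BT1 (ψ ia)
      · exact BT3 (ψ ia)
  have locInj : ∀ v a b, (genPetersen n k).Adj v a → (genPetersen n k).Adj v b → a ≠ b →
      φ a ≠ φ b := by
    rintro ⟨bv, iv⟩ a b ha hb hab
    cases bv
    · rcases (adj_false hn iv _).mp ha with rfl|rfl|rfl <;>
        rcases (adj_false hn iv _).mp hb with rfl|rfl|rfl
      · exact absurd rfl hab
      · rw [hφ, hφ]; intro h
        have h2 : ψ (iv+1) = ψ (iv-1) := congrArg Prod.snd h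
        rw [hψadd, hψsub, hψone] at h2
        exact absurd (show (2:ZMod 4) = 0 from by linear_combination h2) (by decide)
      · rw [hφ, hφ]; intro h
        exact absurd (show (false : Bool) = true from congrArg Prod.fst h) (by decide)
      · rw [hφ, hφ]; intro h
        have h2 : ψ (iv-1) = ψ (iv+1) := congrArg Prod.snd h
        rw [hψadd, hψsub, hψone] at h2
        exact absurd (show (2:ZMod 4) = 0 from by linear_combination -h2) (by decide)
      · exact absurd rfl hab
      · rw [hφ, hφ]; intro h
        exact absurd (show (false : Bool) = true from congrArg Prod.fst h) (by decide)
      · rw [hφ, hφ]; intro h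
        exact absurd (show (false : Bool) = true from (congrArg Prod.fst h).symm) (by decide)
      · rw [hφ, hφ]; intro h
        exact absurd (show (false : Bool) = true from (congrArg Prod.fst h).symm) (by decide)
      · exact absurd rfl hab
    · rcases (adj_true hk hnk iv _).mp ha with rfl|rfl|rfl <;>
        rcases (adj_true hk hnk iv _).mp hb with rfl|rfl|rfl
      · exact absurd rfl hab
      · rw [hφ, hφ]; intro h
        have h2 : ψ (iv+(k:ZMod n)) = ψ (iv-(k:ZMod n)) := congrArg Prod.snd h
        rw [hψadd, hψsub, hψk] at h2
        have h3 : (k : ZMod 4) + (k : ZMod 4) = 0 := by linear_combination h2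
        rcases hk4 with h1 | h1 <;> rw [h1] at h3 <;> exact absurd h3 (by decide)
      · rw [hφ, hφ]; intro h
        exact absurd (show (true : Bool) = false from congrArg Prod.fst h) (by decide)
      · rw [hφ, hφ]; intro h
        have h2 : ψ (iv-(k:ZMod n)) = ψ (iv+(k:ZMod n)) := congrArg Prod.snd h
        rw [hψadd, hψsub, hψk] at h2
        have h3 : (k : ZMod 4) + (k : ZMod 4) = 0 := by linear_combination -h2
        rcases hk4 with h1 | h1 <;> rw [h1] at h3 <;> exact absurd h3 (by decide)
      · exact absurd rfl hab
      · rw [hφ, hφ]; intro h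
        exact absurd (show (true : Bool) = false from congrArg Prod.fst h) (by decide)
      · rw [hφ, hφ]; intro h
        exact absurd (show (true : Bool) = false from (congrArg Prod.fst h).symm) (by decide)
      · rw [hφ, hφ]; intro h
        exact absurd (show (true : Bool) = false from (congrArg Prod.fst h).symm) (by decide)
      · exact absurd rfl hab
  obtain ⟨c, ceval⟩ : ∃ c : Sym2 (Bool × ZMod n) → Fin 4,
      ∀ x y, c s(x,y) = F4 (φ x) (φ y) := by
    refine ⟨fun e => Sym2.lift ⟨F4, F4_symm⟩ (Sym2.map φ e), fun x y => ?_⟩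
    show Sym2.lift ⟨F4, F4_symm⟩ (Sym2.map φ s(x,y)) = _
    rw [Sym2.map_pair_eq, Sym2.lift_mk]
  refine ⟨c, isStar_of_vertex ?_ ?_⟩
  · intro v a b hva hvb hab
    rw [ceval, ceval]
    exact P1 (φ v) (φ a) (φ b) (hom hva) (hom hvb) (locInj v a b hva hvb hab)
  · intro v0 v1 v2 v3 v4 h01 h12 h23 h34 d02 d03 d13 d14 d24 hE
    obtain ⟨E1, E2⟩ := hE
    rw [ceval, ceval] at E1 E2
    have A01 := hom h01
    have A12 := hom h12
    have A23 := hom h23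
    have A34 := hom h34
    have W02 : φ v0 ≠ φ v2 := locInj v1 v0 v2 h01.symm h12 d02
    have W13 : φ v1 ≠ φ v3 := locInj v2 v1 v3 h12.symm h23 d13
    have W24 : φ v2 ≠ φ v4 := locInj v3 v2 v4 h23.symm h34 d24
    have W03 : φ v0 ≠ φ v3 := by
      intro h
      have hadj : (genPetersen 4 1).Adj (φ v0) (φ v2) := by rw [h]; exact A23.symm
      have hne : φ v1 ≠ φ v2 := SimpleGraph.Adj.ne A12
      exact P1 (φ v0) (φ v1) (φ v2) A01 hadj hne (by rw [E1, ← h]; exact F4_symm _ _)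
    have W14 : φ v1 ≠ φ v4 := by
      intro h
      have hadj : (genPetersen 4 1).Adj (φ v1) (φ v3) := by rw [h]; exact A34.symm
      have hne : φ v2 ≠ φ v3 := SimpleGraph.Adj.ne A23
      exact P1 (φ v1) (φ v2) (φ v3) A12 hadj hne (by rw [E2, ← h]; exact F4_symm _ _)
    exact P2 _ _ _ _ _ A01 A12 A23 A34 W02 W03 W13 W14 W24 ⟨E1, E2⟩
theorem star_chromatic_index_genPetersen (n k : ℕ) (hn : 3 ≤ n) (hk : 1 ≤ k)
    (hnk : 2 * k + 1 ≤ n) :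
    starChromaticIndex (genPetersen n k) = 4 ↔ n % 4 = 0 ∧ k % 2 = 1 := by
  rw [starChromaticIndex]
  set S := {m | ∃ c : Sym2 (Bool × ZMod n) → Fin m, IsStarEdgeColoring (genPetersen n k) c}
    with hS
  have h3 : 3 ∉ S := by
    rintro ⟨c, hc⟩
    exact no_three n k hn hk hnk c hc
  constructor
  · intro h
    have hne : S.Nonempty := by
      by_contra h'
      rw [Set.not_nonempty_iff_eq_empty] at h'
      rw [h', Nat.sInf_empty] at h
      exact absurd h (by norm_num)
    have h4 : 4 ∈ S := h ▸ Nat.sInf_mem hne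
    obtain ⟨c, hc⟩ := h4
    exact necessity n k hn hk hnk c hc
  · rintro ⟨h1, h2⟩
    have h4 : 4 ∈ S := existence n k hn hk hnk h1 h2
    refine le_antisymm (Nat.sInf_le h4) ?_
    by_contra hlt
    push_neg at hlt
    have hmem : sInf S ∈ S := Nat.sInf_mem ⟨4, h4⟩
    exact h3 (star_mono (show sInf S ≤ 3 by omega) hmem)
end
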